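/- arXiv:0705.1835 — 4 statements merged into one kernel-verified Lean document; each statement's English description precedes it below -/
import Mathlib

section
/- If a triangulation of a closed surface contains two adjacent vertices each of valence 3, then the triangulation is the boundary of the tetrahedron (it has exactly 4 vertices and 4 triangles). -/
namespace Tri

/-- A (pure 2-dimensional) simplicial complex, given by its set of triangles
(each triangle is a 3-element finset of vertex labels). -/
abbrev Complex := Finset (Finset ℕ)

/-- The vertices of a complex. -/
def vertices (K : Complex) : Finset ℕ := K.biUnion id

/-- The edges of a complex: 2-element subsets of triangles. -/
def edges (K : Complex) : Finset (Finset ℕ) := K.biUnion fun t => t.powersetCard 2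

/-- The valence of a vertex: the number of triangles containing it. -/
def valence (K : Complex) (v : ℕ) : ℕ := (K.filter (fun t => v ∈ t)).card

/-- The maximal vertex-valence of a complex. -/
def mv (K : Complex) : ℕ := (vertices K).sup (valence K)

/-- Euler characteristic V - E + T. -/
def eulerChar (K : Complex) : ℤ :=
  ((vertices K).card : ℤ) - (edges K).card + K.card

/-- Two triangles of `K` both containing `v` and sharing an edge. -/
def adjAt (K : Complex) (v : ℕ) (t₁ t₂ : Finset ℕ) : Prop :=
  t₁ ∈ K ∧ t₂ ∈ K ∧ v ∈ t₁ ∧ v ∈ t₂ ∧ (t₁ ∩ t₂).card = 2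

/-- Two triangles of `K` sharing an edge. -/
def adj (K : Complex) (t₁ t₂ : Finset ℕ) : Prop :=
  t₁ ∈ K ∧ t₂ ∈ K ∧ (t₁ ∩ t₂).card = 2

/-- A triangulation of a connected compact surface, possibly with boundary:
every triangle has 3 vertices, every edge lies in at most two triangles,
the triangles around every vertex are connected via edges through that vertex
(so every vertex link is a path or a circle), and the complex is connected. -/
structure IsSurface (K : Complex) : Prop where
  nonempty : K.Nonempty
  card3 : ∀ t ∈ K, t.card = 3
  edge_le : ∀ e ∈ edges K, (K.filter (fun t => e ⊆ t)).card ≤ 2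
  link_conn : ∀ v, ∀ t₁ ∈ K, ∀ t₂ ∈ K, v ∈ t₁ → v ∈ t₂ →
    Relation.ReflTransGen (adjAt K v) t₁ t₂
  conn : ∀ t₁ ∈ K, ∀ t₂ ∈ K, Relation.ReflTransGen (adj K) t₁ t₂

/-- A triangulation of a closed (connected compact) surface: every edge lies
in exactly two triangles. -/
def IsClosedSurface (K : Complex) : Prop :=
  IsSurface K ∧ ∀ e ∈ edges K, (K.filter (fun t => e ⊆ t)).card = 2

/-- Boundary edges: edges lying in exactly one triangle. -/
def bdryEdges (K : Complex) : Finset (Finset ℕ) :=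
  (edges K).filter (fun e => (K.filter (fun t => e ⊆ t)).card = 1)

/-- Boundary vertices. -/
def bdryVertices (K : Complex) : Finset ℕ := (bdryEdges K).biUnion id

/-- Interior vertices. -/
def intVertices (K : Complex) : Finset ℕ := vertices K \ bdryVertices K

/-- A triangulated disc: a connected compact surface with nonempty boundary and
Euler characteristic 1. -/
def IsDisc (K : Complex) : Prop :=
  IsSurface K ∧ eulerChar K = 1 ∧ (bdryEdges K).Nonempty

/-- Two edges sharing a vertex. -/
def edgeAdj (E : Complex) (e₁ e₂ : Finset ℕ) : Prop :=
  e₁ ∈ E ∧ e₂ ∈ E ∧ (e₁ ∩ e₂).Nonempty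

/-- A set of edges forming a triangulated circle. -/
def IsCircle (E : Complex) : Prop :=
  E.Nonempty ∧ (∀ e ∈ E, e.card = 2) ∧
  (∀ v ∈ E.biUnion id, (E.filter (fun e => v ∈ e)).card = 2) ∧
  ∀ e₁ ∈ E, ∀ e₂ ∈ E, Relation.ReflTransGen (edgeAdj E) e₁ e₂

/-- Simplicial isomorphism (re-labeling). -/
def Iso (K₁ K₂ : Complex) : Prop :=
  ∃ f : ℕ → ℕ, Set.InjOn f (vertices K₁) ∧ K₁.image (Finset.image f) = K₂

/-- The boundary of the tetrahedron. -/
def tetra : Complex := {{1,2,3},{1,2,4},{1,3,4},{2,3,4}}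

/-- The boundary of the octahedron. -/
def octa : Complex := {{1,2,3},{1,2,4},{1,3,5},{1,4,5},{2,3,6},{2,4,6},{3,5,6},{4,5,6}}

/-- The vertices of the link of a vertex. -/
def linkV (K : Complex) (v : ℕ) : Finset ℕ :=
  ((K.filter (fun t => v ∈ t)).biUnion id).erase v

/-- The result of the inverse T-move removing the vertex `v`. -/
def invT (K : Complex) (v : ℕ) : Complex :=
  insert (linkV K v) (K.filter (fun t => v ∉ t))

/-- `K'` is obtained from `K` by an inverse T-move: a 3-valent vertex whose
link does not bound a triangle is removed. -/
def InvTStep (K K' : Complex) : Prop :=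
  ∃ v, valence K v = 3 ∧ linkV K v ∉ K ∧ K' = invT K v

/-- A root: a closed triangulated surface admitting no inverse T-move. -/
def IsRoot (K : Complex) : Prop := IsClosedSurface K ∧ ∀ K', ¬ InvTStep K K'

/-- `R` is a root of `K`: obtained from `K` by inverse T-moves, with no
further inverse T-move applicable. -/
def IsRootOf (R K : Complex) : Prop :=
  Relation.ReflTransGen InvTStep K R ∧ ∀ R', ¬ InvTStep R R'

/-- The directed edges of an ordered triangle. -/
def dedges (p : ℕ × ℕ × ℕ) : Finset (ℕ × ℕ) := {(p.1, p.2.1), (p.2.1, p.2.2), (p.2.2, p.1)}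

/-- Orientability: a coherent choice of cyclic orders on the triangles,
i.e. no directed edge is shared by two distinct triangles. -/
def Orientable (K : Complex) : Prop :=
  ∃ o : Finset ℕ → ℕ × ℕ × ℕ,
    (∀ t ∈ K, ({(o t).1, (o t).2.1, (o t).2.2} : Finset ℕ) = t) ∧
    ∀ t₁ ∈ K, ∀ t₂ ∈ K, t₁ ≠ t₂ → ∀ p ∈ dedges (o t₁), p ∉ dedges (o t₂)

/-- Two closed triangulated surfaces triangulate the same surface iff they
have the same Euler characteristic and the same orientability. -/
def SameSurface (K₁ K₂ : Complex) : Prop :=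
  eulerChar K₁ = eulerChar K₂ ∧ (Orientable K₁ ↔ Orientable K₂)

/-- The intersection of two subcomplexes is a triangulated circle or empty. -/
def CircleInter (A B : Complex) : Prop :=
  (IsCircle (edges A ∩ edges B) ∨ edges A ∩ edges B = ∅) ∧
  vertices A ∩ vertices B = (edges A ∩ edges B).biUnion id

/-- A decomposition `(G, D, Ds)` of a closed triangulated surface `K`. -/
structure IsDecomp (K G D : Complex) (Ds : Finset Complex) : Prop where
  closed : IsClosedSurface K
  subG : G ⊆ K
  subD : D ⊆ K
  subDs : ∀ Di ∈ Ds, Di ⊆ K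
  surfG : IsSurface G
  discD : IsDisc D
  discDs : ∀ Di ∈ Ds, IsDisc Di
  maxv : ∃ v ∈ intVertices D, valence K v = mv K
  cover : G ∪ D ∪ Ds.sup id = K
  disjGD : Disjoint G D
  disjGDs : ∀ Di ∈ Ds, Disjoint G Di
  disjDDs : ∀ Di ∈ Ds, Disjoint D Di
  disjDsDs : ∀ Di ∈ Ds, ∀ Dj ∈ Ds, Di ≠ Dj → Disjoint Di Dj
  interGD : CircleInter G D
  interGDs : ∀ Di ∈ Ds, CircleInter G Di
  interDDs : ∀ Di ∈ Ds, CircleInter D Di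
  interDsDs : ∀ Di ∈ Ds, ∀ Dj ∈ Ds, Di ≠ Dj → CircleInter Di Dj

/-- A minimal decomposition: the genus-surface has the fewest triangles. -/
def IsMinDecomp (K G D : Complex) (Ds : Finset Complex) : Prop :=
  IsDecomp K G D Ds ∧ ∀ G' D' Ds', IsDecomp K G' D' Ds' → G.card ≤ G'.card

/-!
The edge `vw` lies in two triangles `vwa` and `vwb`. The third triangle at the 3-valent vertex `v`
is the second triangle on the edge `va` and also the second one on `vb`, so it is `vab`; likewise
`wab` is a triangle. The four faces of the simplex `vwab` form a subcomplex in which every edge lies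
in two triangles, and in a connected closed surface such a subcomplex is everything.
-/

open Finset

variable {K : Complex}

theorem mem_edges_of_subset {t e : Finset ℕ} (ht : t ∈ K) (he : e ⊆ t) (hc : e.card = 2) :
    e ∈ edges K :=
  mem_biUnion.mpr ⟨t, ht, mem_powersetCard.mpr ⟨he, hc⟩⟩

theorem exists_mem_notMem_of_ne {α : Type*} {p q : Finset α} (hc : p.card = q.card) (hpq : p ≠ q) :
    ∃ a ∈ p, a ∉ q :=
  not_subset.mp fun hsub => hpq (eq_of_subset_of_card_le hsub hc.ge)

theorem IsClosedSurface.exists_pair_of_mem_edges (hK : IsClosedSurface K) {e : Finset ℕ}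
    (he : e ∈ edges K) : ∃ p ∈ K, ∃ q ∈ K, p ≠ q ∧ e ⊆ p ∧ e ⊆ q := by
  obtain ⟨p, q, hpq, hF⟩ := card_eq_two.mp (hK.2 e he)
  have hp : p ∈ K.filter (fun t => e ⊆ t) := hF ▸ mem_insert_self p {q}
  have hq : q ∈ K.filter (fun t => e ⊆ t) := hF ▸ mem_insert_of_mem (mem_singleton_self q)
  exact ⟨p, (mem_filter.mp hp).1, q, (mem_filter.mp hq).1, hpq, (mem_filter.mp hp).2,
    (mem_filter.mp hq).2⟩

theorem IsClosedSurface.exists_ne_of_subset (hK : IsClosedSurface K) {t e : Finset ℕ}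
    (ht : t ∈ K) (he : e ⊆ t) (hc : e.card = 2) : ∃ s ∈ K, s ≠ t ∧ e ⊆ s := by
  have h2 := hK.2 e (mem_edges_of_subset ht he hc)
  obtain ⟨s, hs, hst⟩ := exists_mem_ne (h2 ▸ one_lt_two) t
  exact ⟨s, (mem_filter.mp hs).1, hst, (mem_filter.mp hs).2⟩

theorem eq_or_eq_or_eq_of_valence_eq_three {u : ℕ} {t₁ t₂ t₃ t : Finset ℕ}
    (hu : valence K u = 3) (h₁ : t₁ ∈ K) (h₂ : t₂ ∈ K) (h₃ : t₃ ∈ K)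
    (hu₁ : u ∈ t₁) (hu₂ : u ∈ t₂) (hu₃ : u ∈ t₃)
    (h₁₂ : t₁ ≠ t₂) (h₁₃ : t₁ ≠ t₃) (h₂₃ : t₂ ≠ t₃) (ht : t ∈ K) (hut : u ∈ t) :
    t = t₁ ∨ t = t₂ ∨ t = t₃ := by
  have hsub : {t₁, t₂, t₃} ⊆ K.filter (fun t => u ∈ t) := by
    simp only [insert_subset_iff, singleton_subset_iff, mem_filter]
    exact ⟨⟨h₁, hu₁⟩, ⟨h₂, hu₂⟩, ⟨h₃, hu₃⟩⟩
  have hstar := eq_of_subset_of_card_le hsub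
    (by rw [← valence, hu, card_eq_three.mpr ⟨t₁, t₂, t₃, h₁₂, h₁₃, h₂₃, rfl⟩])
  have : t ∈ ({t₁, t₂, t₃} : Finset (Finset ℕ)) := hstar ▸ mem_filter.mpr ⟨ht, hut⟩
  simpa only [mem_insert, mem_singleton] using this

theorem IsClosedSurface.insert_mem_of_valence_eq_three (hK : IsClosedSurface K)
    {u a b : ℕ} {t₁ t₂ : Finset ℕ} (hu : valence K u = 3) (ht₁ : t₁ ∈ K) (ht₂ : t₂ ∈ K)
    (hut₁ : u ∈ t₁) (hut₂ : u ∈ t₂) (hat₁ : a ∈ t₁) (hat₂ : a ∉ t₂) (hbt₂ : b ∈ t₂)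
    (hbt₁ : b ∉ t₁) (hua : u ≠ a) (hub : u ≠ b) :
    {u, a, b} ∈ K := by
  have hab : a ≠ b := fun h => hat₂ (h ▸ hbt₂)
  have pair_subset : ∀ {x y : ℕ} {t : Finset ℕ}, x ∈ t → y ∈ t → {x, y} ⊆ t := fun hx hy =>
    insert_subset hx (singleton_subset_iff.mpr hy)
  obtain ⟨s, hs, hst₁, hsua⟩ := hK.exists_ne_of_subset ht₁ (pair_subset hut₁ hat₁) (card_pair hua)
  obtain ⟨s', hs', hst₂', hsub'⟩ :=
    hK.exists_ne_of_subset ht₂ (pair_subset hut₂ hbt₂) (card_pair hub)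
  have has : a ∈ s := hsua (by simp)
  have hbs' : b ∈ s' := hsub' (by simp)
  have hs's : s' = s := by
    rcases eq_or_eq_or_eq_of_valence_eq_three hu ht₁ ht₂ hs hut₁ hut₂ (hsua (by simp))
      (fun h => hat₂ (h ▸ hat₁)) hst₁.symm (fun h => hat₂ (h ▸ has)) hs' (hsub' (by simp))
      with h | h | h
    · exact absurd (h ▸ hbs') hbt₁
    · exact absurd h hst₂'
    · exact h
  have hsub : {u, a, b} ⊆ s :=
    insert_subset (hsua (by simp)) (pair_subset has (hs's ▸ hbs'))
  have hcard : s.card ≤ ({u, a, b} : Finset ℕ).card := by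
    rw [hK.1.card3 s hs, card_eq_three.mpr ⟨u, a, b, hua, hub, hab, rfl⟩]
  exact eq_of_subset_of_card_le hsub hcard ▸ hs

def HasNoBoundary (T : Complex) : Prop :=
  ∀ t ∈ T, ∀ e ⊆ t, e.card = 2 → 2 ≤ (T.filter (fun s => e ⊆ s)).card

/-- Each edge of `K` lies in exactly two triangles, so a subcomplex without boundary is closed
under adjacency. -/
theorem IsClosedSurface.eq_of_subset (hK : IsClosedSurface K) {T : Complex} (hTK : T ⊆ K)
    (hT : T.Nonempty) (hbd : HasNoBoundary T) : T = K := by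
  refine Subset.antisymm hTK fun t ht => ?_
  obtain ⟨t₀, ht₀⟩ := hT
  induction hK.1.conn t₀ (hTK ht₀) t ht with
  | refl => exact ht₀
  | @tail t₁ t₂ _ hadj ih =>
    obtain ⟨h₁, h₂, hcard⟩ := hadj
    set e := t₁ ∩ t₂
    have hfilter : T.filter (fun s => e ⊆ s) = K.filter (fun s => e ⊆ s) :=
      eq_of_subset_of_card_le (filter_subset_filter _ hTK)
        ((hK.2 e (mem_edges_of_subset h₁ inter_subset_left hcard)).trans_le
          (hbd t₁ (ih h₁) e inter_subset_left hcard))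
    have : t₂ ∈ T.filter (fun s => e ⊆ s) := hfilter ▸ mem_filter.mpr ⟨h₂, inter_subset_right⟩
    exact (mem_filter.mp this).1

theorem hasNoBoundary_powersetCard_three {X : Finset ℕ} (hX : 4 ≤ X.card) :
    HasNoBoundary (X.powersetCard 3) := by
  intro t ht e het he
  have heX : e ⊆ X := het.trans (mem_powersetCard.mp ht).1
  have hmaps : Set.MapsTo (fun x => insert x e) ↑(X \ e)
      ↑((X.powersetCard 3).filter (fun s => e ⊆ s)) := by
    intro x hx
    obtain ⟨hxX, hxe⟩ := mem_sdiff.mp hx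
    simp only [coe_filter, Set.mem_ofPred_eq, mem_powersetCard]
    exact ⟨⟨insert_subset hxX heX, by rw [card_insert_of_notMem hxe, he]⟩, subset_insert x e⟩
  have hinj : Set.InjOn (fun x => insert x e) ↑(X \ e) := by
    intro x hx y _ hxy
    have hxy : insert x e = insert y e := hxy
    have : x ∈ insert y e := hxy ▸ mem_insert_self x e
    exact (mem_insert.mp this).resolve_right (mem_sdiff.mp hx).2
  calc 2 ≤ (X \ e).card := by rw [card_sdiff_of_subset heX, he]; omega
    _ ≤ _ := card_le_card_of_injOn _ hmaps hinj

theorem vertices_powersetCard_three {X : Finset ℕ} (hX : 3 ≤ X.card) :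
    vertices (X.powersetCard 3) = X := by
  rw [vertices, ← sup_eq_biUnion]
  exact powersetCard_sup X 2 hX

theorem powersetCard_three_subset {v w a b : ℕ} (hvw : v ≠ w) (hva : v ≠ a) (hvb : v ≠ b)
    (hwa : w ≠ a) (hwb : w ≠ b) (hab : a ≠ b) (h₁ : {v, w, a} ∈ K) (h₂ : {v, w, b} ∈ K)
    (h₃ : {v, a, b} ∈ K) (h₄ : {w, a, b} ∈ K) :
    ({v, w, a, b} : Finset ℕ).powersetCard 3 ⊆ K := by
  intro s hs
  obtain ⟨hsX, hcard⟩ := mem_powersetCard.mp hs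
  have hX : ({v, w, a, b} : Finset ℕ).card = 4 :=
    card_eq_four.mpr ⟨v, w, a, b, hvw, hva, hvb, hwa, hwb, hab, rfl⟩
  obtain ⟨x, hxs, hx⟩ := exists_eq_insert_iff.mpr ⟨hsX, by rw [hcard, hX]⟩
  have hxX : x ∈ ({v, w, a, b} : Finset ℕ) := hx ▸ mem_insert_self x s
  rw [← erase_insert hxs, hx]
  simp only [mem_insert, mem_singleton] at hxX
  rcases hxX with rfl | rfl | rfl | rfl
  · simpa [erase_insert_of_ne, hvw, hva, hvb, hwa, hwb, hab] using h₄
  · simpa [erase_insert_of_ne, hvw, hva, hvb, hwa, hwb, hab, hvw.symm] using h₃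
  · simpa [erase_insert_of_ne, hvw, hva, hvb, hwa, hwb, hab, hva.symm, hwa.symm] using h₂
  · simpa [erase_insert_of_ne, hvw, hva, hvb, hwa, hwb, hab, hvb.symm, hwb.symm, hab.symm] using h₁

theorem IsClosedSurface.exists_triangles_of_mem_edges (hK : IsClosedSurface K) {v w : ℕ}
    (hvw : v ≠ w) (hadj : {v, w} ∈ edges K) :
    ∃ a b, v ≠ a ∧ w ≠ a ∧ v ≠ b ∧ w ≠ b ∧ a ≠ b ∧ {v, w, a} ∈ K ∧ {v, w, b} ∈ K := by
  obtain ⟨p, hp, q, hq, hpq, hvwp, hvwq⟩ := hK.exists_pair_of_mem_edges hadj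
  have hpcard := hK.1.card3 p hp
  have hqcard := hK.1.card3 q hq
  obtain ⟨a, hap, haq⟩ := exists_mem_notMem_of_ne (hpcard.trans hqcard.symm) hpq
  obtain ⟨b, hbq, hbp⟩ := exists_mem_notMem_of_ne (hqcard.trans hpcard.symm) hpq.symm
  have hvp : v ∈ p := hvwp (by simp)
  have hwp : w ∈ p := hvwp (by simp)
  have hvq : v ∈ q := hvwq (by simp)
  have hwq : w ∈ q := hvwq (by simp)
  have hva : v ≠ a := fun h => haq (h ▸ hvq)
  have hwa : w ≠ a := fun h => haq (h ▸ hwq)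
  have hvb : v ≠ b := fun h => hbp (h ▸ hvp)
  have hwb : w ≠ b := fun h => hbp (h ▸ hwp)
  have hab : a ≠ b := fun h => hbp (h ▸ hap)
  have triangle_eq : ∀ {t : Finset ℕ} {x : ℕ}, t.card = 3 → {v, w, x} ⊆ t → v ≠ x → w ≠ x →
      {v, w, x} = t := fun ht hsub hvx hwx => eq_of_subset_of_card_le hsub
    (by rw [ht, card_eq_three.mpr ⟨v, w, _, hvw, hvx, hwx, rfl⟩])
  have hvwa : {v, w, a} ∈ K :=
    triangle_eq hpcard (insert_subset hvp (insert_subset hwp (by simpa))) hva hwa ▸ hp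
  have hvwb : {v, w, b} ∈ K :=
    triangle_eq hqcard (insert_subset hvq (insert_subset hwq (by simpa))) hvb hwb ▸ hq
  exact ⟨a, b, hva, hwa, hvb, hwb, hab, hvwa, hvwb⟩

/-- two adjacent 3-valent vertices force the tetrahedron boundary
(exactly 4 vertices and 4 triangles). -/
theorem adjacent_three_valent_tetra (K : Complex) (h : IsClosedSurface K)
    (v w : ℕ) (hvw : v ≠ w) (hv : valence K v = 3) (hw : valence K w = 3)
    (hadj : ({v, w} : Finset ℕ) ∈ edges K) :
    (vertices K).card = 4 ∧ K.card = 4 := by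
  obtain ⟨a, b, hva, hwa, hvb, hwb, hab, hvwa, hvwb⟩ := h.exists_triangles_of_mem_edges hvw hadj
  have hbvwa : b ∉ ({v, w, a} : Finset ℕ) := by simp [hvb.symm, hwb.symm, hab.symm]
  have havwb : a ∉ ({v, w, b} : Finset ℕ) := by simp [hva.symm, hwa.symm, hab]
  have hvab := h.insert_mem_of_valence_eq_three hv hvwa hvwb (by simp) (by simp) (by simp)
    havwb (by simp) hbvwa hva hvb
  have hwab := h.insert_mem_of_valence_eq_three hw hvwa hvwb (by simp) (by simp) (by simp)
    havwb (by simp) hbvwa hwa hwb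
  have hX : ({v, w, a, b} : Finset ℕ).card = 4 :=
    card_eq_four.mpr ⟨v, w, a, b, hvw, hva, hvb, hwa, hwb, hab, rfl⟩
  have hK := h.eq_of_subset (powersetCard_three_subset hvw hva hvb hwa hwb hab hvwa hvwb hvab hwab)
    (powersetCard_nonempty.mpr (by omega)) (hasNoBoundary_powersetCard_three hX.ge)
  rw [← hK, vertices_powersetCard_three (by omega), card_powersetCard, hX]
  exact ⟨rfl, rfl⟩

end Tri
end

section
/- In a triangulation of a closed surface other than the boundary of the tetrahedron, if v is a 3-valent vertex then the link of v does not bound a triangle of the triangulation; consequently an inverse T-move removing v can be applied. -/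
namespace Tri

/-!
Let `vab`, `vbc`, `vca` be the star of the 3-valent vertex `v` (each edge lies in exactly two
triangles). If `abc` were a triangle, the four triangles `vab`, `vbc`, `vca`, `abc` would be closed
under crossing edges, so by connectedness they would be all of `K`: a tetrahedron boundary.

Otherwise the move replaces the star by `abc`. The edges through `v` disappear and every other
edge keeps its number of triangles. Collapsing the star onto `abc` sends adjacent triangles (around
any vertex) to equal or adjacent ones, which carries both connectivity conditions over. The counts
`V`, `E`, `T` drop by `1`, `3`, `2`. A coherent orientation induces on the rim `ab`, `bc`, `ca` of
the star a cyclic order of `abc`; conversely, coning an orientation of `abc` from `v` orients the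
star coherently.
-/

open Finset

lemma mem_edges_iff {K : Complex} {e : Finset ℕ} :
    e ∈ edges K ↔ ∃ t ∈ K, e ⊆ t ∧ e.card = 2 := by
  simp [edges, mem_powersetCard]

lemma ne_of_card_eq_three {α : Type*} [DecidableEq α] {x y z : α}
    (h : ({x, y, z} : Finset α).card = 3) :
    x ≠ y ∧ x ≠ z ∧ y ≠ z := by
  refine ⟨?_, ?_, ?_⟩ <;> rintro rfl <;> simp only [pair_comm, mem_singleton,
    insert_eq_of_mem, mem_insert, or_true] at h <;>
    exact absurd h (card_le_two.trans_lt (by norm_num)).ne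

lemma card_eq_three_of_ne {α : Type*} [DecidableEq α] {x y z : α} (hxy : x ≠ y) (hxz : x ≠ z)
    (hyz : y ≠ z) : ({x, y, z} : Finset α).card = 3 :=
  card_eq_three.mpr ⟨x, y, z, hxy, hxz, hyz, rfl⟩

lemma eq_insert_of_card_eq_three {α : Type*} [DecidableEq α] {t e : Finset α} {v : α}
    (ht : t.card = 3) (hvt : v ∈ t) (het : e ⊆ t) (hve : v ∉ e) (he : e.card = 2) :
    t = insert v e := by
  have hsub : e ⊆ t.erase v := fun x hx => mem_erase.mpr ⟨fun h => hve (h ▸ hx), het hx⟩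
  have : e = t.erase v := eq_of_subset_of_card_le hsub (by rw [card_erase_of_mem hvt]; omega)
  rw [this, insert_erase hvt]

lemma exists_eq_triple {α : Type*} [DecidableEq α] {t : Finset α} (ht : t.card = 3) {x y : α}
    (hxy : x ≠ y) (hx : x ∈ t) (hy : y ∈ t) : ∃ z, z ≠ x ∧ z ≠ y ∧ t = {x, y, z} := by
  have hsub : ({x, y} : Finset α) ⊆ t := by simp [insert_subset_iff, hx, hy]
  obtain ⟨z, hz⟩ : ∃ z, t \ {x, y} = {z} := card_eq_one.mp (by
    rw [card_sdiff_of_subset hsub, ht, card_pair hxy])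
  have hzt : z ∈ t \ {x, y} := hz ▸ mem_singleton_self z
  simp only [mem_sdiff, mem_insert, mem_singleton, not_or] at hzt
  refine ⟨z, hzt.2.1, hzt.2.2, ?_⟩
  rw [← sdiff_union_of_subset hsub, hz]
  ext w; simp; tauto

lemma exists_eq_insert_pair {α : Type*} [DecidableEq α] {t : Finset α} (ht : t.card = 3) {v : α}
    (hv : v ∈ t) :
    ∃ a b, v ≠ a ∧ v ≠ b ∧ a ≠ b ∧ t = {v, a, b} := by
  obtain ⟨a, b, hab, hab_eq⟩ := card_eq_two.mp (by rw [card_erase_of_mem hv, ht] :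
    (t.erase v).card = 2)
  have ha : a ∈ t.erase v := hab_eq ▸ by simp
  have hb : b ∈ t.erase v := hab_eq ▸ by simp
  exact ⟨a, b, (ne_of_mem_erase ha).symm, (ne_of_mem_erase hb).symm, hab,
    by rw [← hab_eq, insert_erase hv]⟩

namespace IsClosedSurface

variable {K : Complex}

lemma card_filter_subset_eq_two (h : IsClosedSurface K) {e t : Finset ℕ} (ht : t ∈ K)
    (het : e ⊆ t) (he : e.card = 2) : (K.filter (e ⊆ ·)).card = 2 :=
  h.2 e (mem_edges_iff.mpr ⟨t, ht, het, he⟩)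

lemma eq_or_eq_of_subset (h : IsClosedSurface K) {e t₁ t₂ s : Finset ℕ} (he : e.card = 2)
    (ht₁ : t₁ ∈ K) (ht₂ : t₂ ∈ K) (hne : t₁ ≠ t₂) (het₁ : e ⊆ t₁) (het₂ : e ⊆ t₂) (hs : s ∈ K)
    (hes : e ⊆ s) : s = t₁ ∨ s = t₂ := by
  have hpair : K.filter (e ⊆ ·) = {t₁, t₂} :=
    (eq_of_subset_of_card_le (by simp [insert_subset_iff, ht₁, ht₂, het₁, het₂])
      (by rw [h.card_filter_subset_eq_two ht₁ het₁ he, card_pair hne])).symm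
  have hs' : s ∈ K.filter (e ⊆ ·) := mem_filter.mpr ⟨hs, hes⟩
  simpa [hpair] using hs'

lemma exists_triangle_across (h : IsClosedSurface K) {t : Finset ℕ} (ht : t ∈ K) {x y : ℕ}
    (hxy : x ≠ y) (hx : x ∈ t) (hy : y ∈ t) :
    ∃ z, z ≠ x ∧ z ≠ y ∧ {x, y, z} ∈ K ∧ ({x, y, z} : Finset ℕ) ≠ t := by
  have hsub : ({x, y} : Finset ℕ) ⊆ t := by simp [insert_subset_iff, hx, hy]
  obtain ⟨s, hs, hst⟩ := exists_mem_ne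
    (h.card_filter_subset_eq_two ht hsub (card_pair hxy) ▸ one_lt_two) t
  rw [mem_filter] at hs
  obtain ⟨z, hzx, hzy, rfl⟩ := exists_eq_triple (h.1.card3 s hs.1) hxy
    (hs.2 (by simp)) (hs.2 (by simp))
  exact ⟨z, hzx, hzy, hs.1, hst⟩

end IsClosedSurface

def IsOrientation (K : Complex) (o : Finset ℕ → ℕ × ℕ × ℕ) : Prop :=
  (∀ t ∈ K, ({(o t).1, (o t).2.1, (o t).2.2} : Finset ℕ) = t) ∧
    ∀ t₁ ∈ K, ∀ t₂ ∈ K, t₁ ≠ t₂ → ∀ p ∈ dedges (o t₁), p ∉ dedges (o t₂)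

lemma IsOrientation.mono {K K' : Complex} {o : Finset ℕ → ℕ × ℕ × ℕ}
    (ho : IsOrientation K o) (h : K' ⊆ K) : IsOrientation K' o :=
  ⟨fun t ht => ho.1 t (h ht), fun t₁ h₁ t₂ h₂ => ho.2 t₁ (h h₁) t₂ (h h₂)⟩

lemma IsOrientation.orientable_union {A B : Complex} {o₁ o₂ : Finset ℕ → ℕ × ℕ × ℕ}
    (h₁ : IsOrientation A o₁) (h₂ : IsOrientation B o₂)
    (hAB : ∀ t₁ ∈ A, ∀ t₂ ∈ B, t₁ ≠ t₂ → ∀ p ∈ dedges (o₁ t₁), p ∉ dedges (o₂ t₂)) :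
    Orientable (A ∪ B) := by
  classical
  refine ⟨fun t => if t ∈ A then o₁ t else o₂ t, fun t ht => ?_, fun t₁ ht₁ t₂ ht₂ hne => ?_⟩
  · by_cases htA : t ∈ A
    · simpa [htA] using h₁.1 t htA
    · simpa [htA] using h₂.1 t ((mem_union.mp ht).resolve_left htA)
  · by_cases hA₁ : t₁ ∈ A <;> by_cases hA₂ : t₂ ∈ A <;> simp only [hA₁, hA₂, if_true, if_false]
    · exact h₁.2 t₁ hA₁ t₂ hA₂ hne
    · exact hAB t₁ hA₁ t₂ ((mem_union.mp ht₂).resolve_left hA₂) hne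
    · exact fun p hp hp' => hAB t₂ hA₂ t₁ ((mem_union.mp ht₁).resolve_left hA₁) hne.symm p hp' hp
    · exact h₂.2 t₁ ((mem_union.mp ht₁).resolve_left hA₁) t₂ ((mem_union.mp ht₂).resolve_left hA₂)
        hne

lemma mem_of_mem_dedges {p : ℕ × ℕ × ℕ} {x y : ℕ} (h : (x, y) ∈ dedges p) :
    x ∈ ({p.1, p.2.1, p.2.2} : Finset ℕ) ∧ y ∈ ({p.1, p.2.1, p.2.2} : Finset ℕ) := by
  simp only [dedges, mem_insert, mem_singleton, Prod.mk.injEq] at h ⊢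
  omega

lemma mem_dedges_next {p : ℕ × ℕ × ℕ} {t : Finset ℕ}
    (hp : ({p.1, p.2.1, p.2.2} : Finset ℕ) = t) (ht : t.card = 3) {x y z : ℕ}
    (hxy : (x, y) ∈ dedges p) (hz : z ∈ t) (hzx : z ≠ x) (hzy : z ≠ y) : (y, z) ∈ dedges p := by
  subst hp
  have := ne_of_card_eq_three ht
  simp only [dedges, mem_insert, mem_singleton, Prod.mk.injEq] at hxy hz ⊢
  omega

lemma mem_dedges_or_swap {p : ℕ × ℕ × ℕ} {t : Finset ℕ}
    (hp : ({p.1, p.2.1, p.2.2} : Finset ℕ) = t) (ht : t.card = 3) {x y : ℕ} (hx : x ∈ t)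
    (hy : y ∈ t) (hxy : x ≠ y) : (x, y) ∈ dedges p ∨ (y, x) ∈ dedges p := by
  subst hp
  have := ne_of_card_eq_three ht
  simp only [dedges, mem_insert, mem_singleton, Prod.mk.injEq] at hx hy ⊢
  omega

/-- Orients `vab`, `vbc`, `vca` as `(a, b, v)`, `(b, c, v)`, `(c, a, v)`: the cone with apex `v`
over the oriented triangle `(a, b, c)`. -/
def coneOrientation (v a b c : ℕ) (t : Finset ℕ) : ℕ × ℕ × ℕ :=
  if a ∉ t then (b, c, v) else if b ∉ t then (c, a, v) else (a, b, v)

lemma isOrientation_coneOrientation {v a b c : ℕ} (hva : v ≠ a) (hvb : v ≠ b) (hvc : v ≠ c)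
    (hab : a ≠ b) (hbc : b ≠ c) (hac : a ≠ c) :
    IsOrientation {{v, a, b}, {v, b, c}, {v, c, a}} (coneOrientation v a b c) := by
  refine ⟨fun t ht => ?_, fun t₁ ht₁ t₂ ht₂ hne ⟨x, y⟩ hp₁ hp₂ => ?_⟩
  · simp only [mem_insert, mem_singleton] at ht
    rcases ht with rfl | rfl | rfl <;>
      simp [coneOrientation, hva.symm, hvb.symm, hab, hbc, hac, hab.symm] <;> ext <;> simp <;>
      tauto
  · simp only [mem_insert, mem_singleton] at ht₁ ht₂
    rcases ht₁ with rfl | rfl | rfl <;> rcases ht₂ with rfl | rfl | rfl <;>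
      simp [coneOrientation, dedges, hva.symm, hvb.symm, hab, hbc, hac, hab.symm]
        at hne hp₁ hp₂ <;>
      omega

lemma iso_tetra {v a b c : ℕ} (hva : v ≠ a) (hvb : v ≠ b) (hvc : v ≠ c) (hab : a ≠ b)
    (hbc : b ≠ c) (hac : a ≠ c) : Iso {{v, a, b}, {v, b, c}, {v, c, a}, {a, b, c}} tetra := by
  let f : ℕ → ℕ := fun x => if x = v then 1 else if x = a then 2 else if x = b then 3 else 4
  have fv : f v = 1 := by simp [f]
  have fa : f a = 2 := by simp [f, hva.symm]
  have fb : f b = 3 := by simp [f, hvb.symm, hab.symm]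
  have fc : f c = 4 := by simp [f, hvc.symm, hac.symm, hbc.symm]
  have hV : ∀ x ∈ vertices {{v, a, b}, {v, b, c}, {v, c, a}, {a, b, c}},
      x = v ∨ x = a ∨ x = b ∨ x = c := by
    intro x hx
    simp only [vertices, mem_biUnion, mem_insert, mem_singleton, id] at hx
    obtain ⟨t, ht, hxt⟩ := hx
    rcases ht with rfl | rfl | rfl | rfl <;> simp at hxt <;> tauto
  refine ⟨f, fun x hx y hy hxy => ?_, ?_⟩
  · rcases hV x hx with rfl | rfl | rfl | rfl <;> rcases hV y hy with rfl | rfl | rfl | rfl <;>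
      simp_all
  · simp only [image_insert, image_singleton, fv, fa, fb, fc]
    decide

def collapse (v : ℕ) (L t : Finset ℕ) : Finset ℕ := if v ∈ t then L else t

structure FanAt (K : Complex) (v a b c : ℕ) : Prop where
  v_ne_a : v ≠ a
  v_ne_b : v ≠ b
  v_ne_c : v ≠ c
  a_ne_b : a ≠ b
  b_ne_c : b ≠ c
  a_ne_c : a ≠ c
  star_eq : K.filter (v ∈ ·) = {{v, a, b}, {v, b, c}, {v, c, a}}

lemma IsClosedSurface.exists_fanAt {K : Complex} (h : IsClosedSurface K) {v : ℕ}
    (h3 : valence K v = 3) : ∃ a b c, FanAt K v a b c := by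
  set S := K.filter (v ∈ ·)
  have hS : S.card = 3 := h3
  have memS {t : Finset ℕ} (ht : t ∈ K) (hvt : v ∈ t) : t ∈ S := mem_filter.mpr ⟨ht, hvt⟩
  obtain ⟨t₁, ht₁⟩ : S.Nonempty := card_pos.mp (by omega)
  obtain ⟨ht₁K, hvt₁⟩ := mem_filter.mp ht₁
  obtain ⟨a, b, hva, hvb, hab, rfl⟩ := exists_eq_insert_pair (h.1.card3 _ ht₁K) hvt₁
  obtain ⟨c, hcv, hca, hvac, hvac_ne⟩ := h.exists_triangle_across ht₁K hva (by simp) (by simp)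
  obtain ⟨d, -, -, hvbd, hvbd_ne⟩ := h.exists_triangle_across ht₁K hvb (by simp) (by simp)
  have hcb : c ≠ b := by rintro rfl; exact hvac_ne rfl
  have hda : d ≠ a := by rintro rfl; exact hvbd_ne (by rw [pair_comm])
  have hS₃ : S = {{v, a, b}, {v, b, d}, {v, a, c}} := by
    refine (eq_of_subset_of_card_le ?_ ?_).symm
    · simp [insert_subset_iff, memS, hvac, hvbd, ht₁K]
    · rw [hS, card_eq_three_of_ne hvbd_ne.symm hvac_ne.symm fun heq => ?_]
      have : b ∈ ({v, a, c} : Finset ℕ) := heq ▸ by simp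
      simp [hvb.symm, hab.symm, hcb.symm] at this
  obtain ⟨e, -, -, hvce, hvce_ne⟩ :=
    h.exists_triangle_across hvac (Ne.symm hcv) (by simp) (by simp)
  have hcd : c = d := by
    have hmem := memS hvce (by simp)
    have hc : c ∈ ({v, c, e} : Finset ℕ) := by simp
    rw [hS₃] at hmem
    simp only [mem_insert, mem_singleton] at hmem
    rcases hmem with h₁ | h₂ | h₃
    · simp [h₁, hcv, hca, hcb] at hc
    · simpa [h₂, hcv, hcb] using hc
    · exact absurd h₃ hvce_ne
  subst hcd
  refine ⟨a, b, c, ⟨hva, hvb, Ne.symm hcv, hab, Ne.symm hcb, Ne.symm hca, ?_⟩⟩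
  change S = _
  rw [hS₃, pair_comm a c]

namespace FanAt

variable {K : Complex} {v a b c : ℕ} {o : Finset ℕ → ℕ × ℕ × ℕ}

lemma cycle (hf : FanAt K v a b c) : FanAt K v b c a :=
  ⟨hf.v_ne_b, hf.v_ne_c, hf.v_ne_a, hf.b_ne_c, hf.a_ne_c.symm, hf.a_ne_b.symm, by
    rw [hf.star_eq]; ext t; simp only [mem_insert, mem_singleton]; tauto⟩

lemma swap (hf : FanAt K v a b c) : FanAt K v b a c :=
  ⟨hf.v_ne_b, hf.v_ne_a, hf.v_ne_c, hf.a_ne_b.symm, hf.a_ne_c, hf.b_ne_c, by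
    rw [hf.star_eq, pair_comm a b, pair_comm b c, pair_comm c a]
    ext t; simp only [mem_insert, mem_singleton]; tauto⟩

lemma mem_star (hf : FanAt K v a b c) {t : Finset ℕ} (ht : t ∈ K) (hvt : v ∈ t) :
    t = {v, a, b} ∨ t = {v, b, c} ∨ t = {v, c, a} := by
  have : t ∈ K.filter (v ∈ ·) := mem_filter.mpr ⟨ht, hvt⟩
  simpa [hf.star_eq] using this

lemma vab_mem (hf : FanAt K v a b c) : ({v, a, b} : Finset ℕ) ∈ K := by
  have : ({v, a, b} : Finset ℕ) ∈ K.filter (v ∈ ·) := by rw [hf.star_eq]; simp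
  exact (mem_filter.mp this).1

lemma vab_ne_vbc (hf : FanAt K v a b c) : ({v, a, b} : Finset ℕ) ≠ {v, b, c} := by
  intro heq
  have : a ∈ ({v, b, c} : Finset ℕ) := heq ▸ by simp
  simp [hf.v_ne_a.symm, hf.a_ne_b, hf.a_ne_c] at this

lemma v_notMem_link (hf : FanAt K v a b c) : v ∉ ({a, b, c} : Finset ℕ) := by
  simp [hf.v_ne_a, hf.v_ne_b, hf.v_ne_c]

lemma card_link (hf : FanAt K v a b c) : ({a, b, c} : Finset ℕ).card = 3 :=
  card_eq_three_of_ne hf.a_ne_b hf.a_ne_c hf.b_ne_c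

lemma card_vab (hf : FanAt K v a b c) : ({v, a, b} : Finset ℕ).card = 3 :=
  card_eq_three_of_ne hf.v_ne_a hf.v_ne_b hf.a_ne_b

lemma subset_link (hf : FanAt K v a b c) {t e : Finset ℕ} (ht : t ∈ K) (hvt : v ∈ t)
    (het : e ⊆ t) (hve : v ∉ e) : e ⊆ {a, b, c} := by
  rcases hf.mem_star ht hvt with rfl | rfl | rfl <;>
    refine ((subset_insert_iff_of_notMem hve).mp het).trans ?_ <;>
    simp [insert_subset_iff]

lemma insert_mem (hf : FanAt K v a b c) {e : Finset ℕ} (he : e ⊆ {a, b, c}) (he2 : e.card = 2) :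
    insert v e ∈ K := by
  obtain ⟨x, y, hxy, rfl⟩ := card_eq_two.mp he2
  have hx : x ∈ ({a, b, c} : Finset ℕ) := he (by simp)
  have hy : y ∈ ({a, b, c} : Finset ℕ) := he (by simp)
  suffices insert v {x, y} ∈ K.filter (v ∈ ·) from (mem_filter.mp this).1
  rw [hf.star_eq]
  simp only [mem_insert, mem_singleton] at hx hy
  rcases hx with rfl | rfl | rfl <;> rcases hy with rfl | rfl | rfl <;>
    simp [pair_comm] at hxy ⊢

lemma exists_mem_of_mem_link (hf : FanAt K v a b c) {x : ℕ} (hx : x ∈ ({a, b, c} : Finset ℕ)) :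
    ∃ t ∈ K, v ∈ t ∧ x ∈ t := by
  simp only [mem_insert, mem_singleton] at hx
  rcases hx with rfl | rfl | rfl
  · exact ⟨_, hf.vab_mem, by simp, by simp⟩
  · exact ⟨_, hf.vab_mem, by simp, by simp⟩
  · exact ⟨_, hf.cycle.vab_mem, by simp, by simp⟩

lemma linkV_eq (hf : FanAt K v a b c) : linkV K v = {a, b, c} := by
  ext x
  simp only [linkV, hf.star_eq, mem_erase, mem_biUnion, mem_insert, mem_singleton, id]
  have := hf.v_ne_a; have := hf.v_ne_b; have := hf.v_ne_c
  constructor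
  · rintro ⟨hxv, t, ht, hxt⟩
    rcases ht with rfl | rfl | rfl <;> simp at hxt <;> tauto
  · rintro (rfl | rfl | rfl) <;> simp <;> tauto

lemma eq_of_link_mem (h : IsClosedSurface K) (hf : FanAt K v a b c) (hL : {a, b, c} ∈ K) :
    K = {{v, a, b}, {v, b, c}, {v, c, a}, {a, b, c}} := by
  set K₀ : Complex := {{v, a, b}, {v, b, c}, {v, c, a}, {a, b, c}}
  have hK₀ : K₀ ⊆ K := by
    simp [K₀, insert_subset_iff, hf.vab_mem, hf.cycle.vab_mem, hf.cycle.cycle.vab_mem, hL]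
  have hclosed : ∀ t s, t ∈ K₀ → adj K t s → s ∈ K₀ := by
    rintro t s ht ⟨htK, hsK, hts⟩
    by_cases hvs : v ∈ s
    · rcases hf.mem_star hsK hvs with rfl | rfl | rfl <;> simp [K₀]
    have hve : v ∉ t ∩ s := fun hv => hvs (mem_inter.mp hv).2
    have heL : t ∩ s ⊆ {a, b, c} := by
      by_cases hvt : v ∈ t
      · exact hf.subset_link htK hvt inter_subset_left hve
      · have : t = {a, b, c} := by simp [K₀] at ht; aesop
        exact this ▸ inter_subset_left
    have hne : ({a, b, c} : Finset ℕ) ≠ insert v (t ∩ s) :=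
      fun heq => hf.v_notMem_link (heq ▸ mem_insert_self _ _)
    rcases h.eq_or_eq_of_subset hts hL (hf.insert_mem heL hts) hne heL (subset_insert _ _) hsK
      inter_subset_right with rfl | hs
    · simp [K₀]
    · exact absurd (hs ▸ mem_insert_self _ _) hvs
  refine Subset.antisymm (fun s hs => ?_) hK₀
  induction h.1.conn _ hf.vab_mem s hs with
  | refl => simp [K₀]
  | tail _ hstep ih => exact hclosed _ _ (ih hstep.1) hstep

lemma link_notMem (h : IsClosedSurface K) (hf : FanAt K v a b c) (hK : ¬ Iso K tetra) :
    ({a, b, c} : Finset ℕ) ∉ K := fun hL =>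
  hK (hf.eq_of_link_mem h hL ▸
    iso_tetra hf.v_ne_a hf.v_ne_b hf.v_ne_c hf.a_ne_b hf.b_ne_c hf.a_ne_c)

lemma mem_invT (hf : FanAt K v a b c) {t : Finset ℕ} :
    t ∈ invT K v ↔ t = {a, b, c} ∨ (t ∈ K ∧ v ∉ t) := by
  rw [invT, hf.linkV_eq, mem_insert, mem_filter]

lemma link_mem_invT (hf : FanAt K v a b c) : ({a, b, c} : Finset ℕ) ∈ invT K v :=
  hf.mem_invT.mpr (Or.inl rfl)

lemma mem_invT_of_mem (hf : FanAt K v a b c) {t : Finset ℕ} (ht : t ∈ K) (hvt : v ∉ t) :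
    t ∈ invT K v :=
  hf.mem_invT.mpr (Or.inr ⟨ht, hvt⟩)

lemma card_filter_subset_invT (h : IsClosedSurface K) (hf : FanAt K v a b c)
    (hL : ({a, b, c} : Finset ℕ) ∉ K) {e : Finset ℕ} (he : e.card = 2) (hve : v ∉ e) :
    ((invT K v).filter (e ⊆ ·)).card = (K.filter (e ⊆ ·)).card := by
  have hstar {t : Finset ℕ} (ht : t ∈ K) (hvt : v ∈ t) (het : e ⊆ t) : t = insert v e :=
    eq_insert_of_card_eq_three (h.1.card3 t ht) hvt het hve he
  by_cases heL : e ⊆ {a, b, c}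
  · have hcone : insert v e ∈ K.filter (e ⊆ ·) :=
      mem_filter.mpr ⟨hf.insert_mem heL he, subset_insert _ _⟩
    have hnot : ({a, b, c} : Finset ℕ) ∉ (K.filter (e ⊆ ·)).erase (insert v e) :=
      fun hmem => hL (mem_filter.mp (mem_of_mem_erase hmem)).1
    have heq : (invT K v).filter (e ⊆ ·) =
        insert {a, b, c} ((K.filter (e ⊆ ·)).erase (insert v e)) := by
      ext t
      simp only [mem_filter, hf.mem_invT, mem_insert, mem_erase]
      constructor
      · rintro ⟨rfl | ⟨ht, hvt⟩, het⟩
        · exact Or.inl rfl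
        · exact Or.inr ⟨fun heq => hvt (heq ▸ mem_insert_self _ _), ht, het⟩
      · rintro (rfl | ⟨hne, ht, het⟩)
        · exact ⟨Or.inl rfl, heL⟩
        · exact ⟨Or.inr ⟨ht, fun hvt => hne (hstar ht hvt het)⟩, het⟩
    rw [heq, card_insert_of_notMem hnot, card_erase_of_mem hcone,
      Nat.sub_add_cancel (card_pos.mpr ⟨_, hcone⟩)]
  · congr 1
    ext t
    simp only [mem_filter, hf.mem_invT]
    constructor
    · rintro ⟨rfl | ⟨ht, -⟩, het⟩
      · exact absurd het heL
      · exact ⟨ht, het⟩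
    · rintro ⟨ht, het⟩
      exact ⟨Or.inr ⟨ht, fun hvt => heL (hf.subset_link ht hvt het hve)⟩, het⟩

lemma edges_invT (hf : FanAt K v a b c) :
    edges (invT K v) = (edges K).filter (v ∉ ·) := by
  ext e
  simp only [mem_filter, mem_edges_iff, hf.mem_invT]
  constructor
  · rintro ⟨t, rfl | ⟨ht, hvt⟩, het, he⟩
    · exact ⟨⟨_, hf.insert_mem het he, subset_insert _ _, he⟩,
        fun hve => hf.v_notMem_link (het hve)⟩
    · exact ⟨⟨t, ht, het, he⟩, fun hve => hvt (het hve)⟩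
  · rintro ⟨⟨t, ht, het, he⟩, hve⟩
    by_cases hvt : v ∈ t
    · exact ⟨_, Or.inl rfl, hf.subset_link ht hvt het hve, he⟩
    · exact ⟨t, Or.inr ⟨ht, hvt⟩, het, he⟩

lemma collapse_mem_invT (hf : FanAt K v a b c) {t : Finset ℕ} (ht : t ∈ K) :
    collapse v {a, b, c} t ∈ invT K v := by
  unfold collapse
  split_ifs with hvt
  · exact hf.link_mem_invT
  · exact hf.mem_invT_of_mem ht hvt

lemma exists_collapse_eq (hf : FanAt K v a b c) {t : Finset ℕ} (ht : t ∈ invT K v) {w : ℕ}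
    (hwt : w ∈ t) : ∃ s ∈ K, w ∈ s ∧ collapse v {a, b, c} s = t := by
  rcases hf.mem_invT.mp ht with rfl | ⟨ht, hvt⟩
  · obtain ⟨s, hs, hvs, hws⟩ := hf.exists_mem_of_mem_link hwt
    exact ⟨s, hs, hws, if_pos hvs⟩
  · exact ⟨t, ht, hwt, if_neg hvt⟩

lemma inter_subset_link (h : IsClosedSurface K) (hf : FanAt K v a b c)
    (hL : ({a, b, c} : Finset ℕ) ∉ K) {s s' : Finset ℕ} (hs : s ∈ K) (hs' : s' ∈ K)
    (hvs : v ∈ s) (hvs' : v ∉ s') (hss' : (s ∩ s').card = 2) :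
    s ∩ s' ⊆ {a, b, c} ∩ s' ∧ ({a, b, c} ∩ s').card = 2 := by
  have hsub : s ∩ s' ⊆ {a, b, c} ∩ s' := subset_inter
    (hf.subset_link hs hvs inter_subset_left fun hv => hvs' (mem_inter.mp hv).2)
    inter_subset_right
  refine ⟨hsub, le_antisymm ?_ (hss' ▸ card_le_card hsub)⟩
  by_contra! hlt
  have hLs' : {a, b, c} ∩ s' = {a, b, c} :=
    eq_of_subset_of_card_le inter_subset_left (hf.card_link ▸ hlt)
  have : ({a, b, c} : Finset ℕ) = s' :=
    eq_of_subset_of_card_le (hLs' ▸ inter_subset_right) (by rw [hf.card_link, h.1.card3 s' hs'])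
  exact hL (this ▸ hs')

lemma collapse_of_card_inter (h : IsClosedSurface K) (hf : FanAt K v a b c)
    (hL : ({a, b, c} : Finset ℕ) ∉ K) {s s' : Finset ℕ} (hs : s ∈ K) (hs' : s' ∈ K)
    (hss' : (s ∩ s').card = 2) :
    collapse v {a, b, c} s = collapse v {a, b, c} s' ∨
      (s ∩ s' ⊆ collapse v {a, b, c} s ∩ collapse v {a, b, c} s' ∧
        (collapse v {a, b, c} s ∩ collapse v {a, b, c} s').card = 2) := by
  by_cases hvs : v ∈ s <;> by_cases hvs' : v ∈ s' <;>
    simp only [collapse, hvs, hvs', if_true, if_false, true_or]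
  · exact Or.inr (hf.inter_subset_link h hL hs hs' hvs hvs' hss')
  · rw [inter_comm s, inter_comm s] at *
    exact Or.inr (hf.inter_subset_link h hL hs' hs hvs' hvs hss')
  · exact Or.inr ⟨subset_rfl, hss'⟩

lemma reflTransGen_adjAt_collapse (h : IsClosedSurface K) (hf : FanAt K v a b c)
    (hL : ({a, b, c} : Finset ℕ) ∉ K) {w : ℕ} {s s' : Finset ℕ} (hss' : adjAt K w s s') :
    Relation.ReflTransGen (adjAt (invT K v) w) (collapse v {a, b, c} s)
      (collapse v {a, b, c} s') := by
  obtain ⟨hs, hs', hws, hws', hcard⟩ := hss'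
  rcases hf.collapse_of_card_inter h hL hs hs' hcard with heq | ⟨hsub, hcard'⟩
  · exact heq ▸ .refl
  · have hw := mem_inter.mp (hsub (mem_inter.mpr ⟨hws, hws'⟩))
    exact .single ⟨hf.collapse_mem_invT hs, hf.collapse_mem_invT hs', hw.1, hw.2, hcard'⟩

lemma reflTransGen_adj_collapse (h : IsClosedSurface K) (hf : FanAt K v a b c)
    (hL : ({a, b, c} : Finset ℕ) ∉ K) {s s' : Finset ℕ} (hss' : adj K s s') :
    Relation.ReflTransGen (adj (invT K v)) (collapse v {a, b, c} s)
      (collapse v {a, b, c} s') := by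
  obtain ⟨hs, hs', hcard⟩ := hss'
  rcases hf.collapse_of_card_inter h hL hs hs' hcard with heq | ⟨-, hcard'⟩
  · exact heq ▸ .refl
  · exact .single ⟨hf.collapse_mem_invT hs, hf.collapse_mem_invT hs', hcard'⟩

lemma isClosedSurface_invT (h : IsClosedSurface K) (hf : FanAt K v a b c)
    (hL : ({a, b, c} : Finset ℕ) ∉ K) : IsClosedSurface (invT K v) := by
  have hcard : ∀ t ∈ invT K v, t.card = 3 := by
    intro t ht
    rcases hf.mem_invT.mp ht with rfl | ⟨ht, -⟩
    exacts [hf.card_link, h.1.card3 t ht]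
  have hedge : ∀ e ∈ edges (invT K v), ((invT K v).filter (e ⊆ ·)).card = 2 := by
    intro e he
    obtain ⟨heK, hve⟩ := mem_filter.mp (hf.edges_invT ▸ he)
    obtain ⟨-, -, -, he2⟩ := mem_edges_iff.mp heK
    rw [hf.card_filter_subset_invT h hL he2 hve, h.2 e heK]
  refine ⟨⟨⟨_, hf.link_mem_invT⟩, hcard, fun e he => (hedge e he).le, ?_, ?_⟩, hedge⟩
  · intro w t ht t' ht' hwt hwt'
    obtain ⟨s, hs, hws, rfl⟩ := hf.exists_collapse_eq ht hwt
    obtain ⟨s', hs', hws', rfl⟩ := hf.exists_collapse_eq ht' hwt'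
    exact Relation.ReflTransGen.lift' (collapse v {a, b, c})
      (fun _ _ => hf.reflTransGen_adjAt_collapse h hL) _ _
      (h.1.link_conn w s hs s' hs' hws hws')
  · intro t ht t' ht'
    obtain ⟨w, hwt⟩ := card_pos.mp (by rw [hcard t ht]; norm_num)
    obtain ⟨w', hwt'⟩ := card_pos.mp (by rw [hcard t' ht']; norm_num)
    obtain ⟨s, hs, -, rfl⟩ := hf.exists_collapse_eq ht hwt
    obtain ⟨s', hs', -, rfl⟩ := hf.exists_collapse_eq ht' hwt'
    exact Relation.ReflTransGen.lift' (collapse v {a, b, c})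
      (fun _ _ => hf.reflTransGen_adj_collapse h hL) _ _ (h.1.conn s hs s' hs')

lemma vertices_invT (hf : FanAt K v a b c) : vertices (invT K v) = (vertices K).erase v := by
  ext x
  simp only [vertices, mem_erase, mem_biUnion, id, hf.mem_invT]
  constructor
  · rintro ⟨t, rfl | ⟨ht, hvt⟩, hxt⟩
    · obtain ⟨s, hs, -, hxs⟩ := hf.exists_mem_of_mem_link hxt
      exact ⟨fun hxv => hf.v_notMem_link (hxv ▸ hxt), s, hs, hxs⟩
    · exact ⟨fun hxv => hvt (hxv ▸ hxt), t, ht, hxt⟩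
  · rintro ⟨hxv, t, ht, hxt⟩
    by_cases hvt : v ∈ t
    · exact ⟨_, Or.inl rfl, hf.subset_link ht hvt (singleton_subset_iff.mpr hxt)
        (by simpa using Ne.symm hxv) (mem_singleton_self x)⟩
    · exact ⟨t, Or.inr ⟨ht, hvt⟩, hxt⟩

lemma card_star (hf : FanAt K v a b c) : (K.filter (v ∈ ·)).card = 3 := by
  rw [hf.star_eq]
  exact card_eq_three_of_ne hf.vab_ne_vbc hf.cycle.cycle.vab_ne_vbc.symm hf.cycle.vab_ne_vbc

lemma card_filter_mem_edges (hf : FanAt K v a b c) : ((edges K).filter (v ∈ ·)).card = 3 := by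
  have himage : (edges K).filter (v ∈ ·) = ({a, b, c} : Finset ℕ).image ({v, ·}) := by
    ext e
    simp only [mem_filter, mem_image, mem_edges_iff]
    constructor
    · rintro ⟨⟨t, ht, het, he⟩, hve⟩
      obtain ⟨x, hx⟩ := card_eq_one.mp (by rw [card_erase_of_mem hve, he] : (e.erase v).card = 1)
      have hxe : x ∈ e.erase v := hx ▸ mem_singleton_self x
      refine ⟨x, hf.subset_link ht (het hve)
        (singleton_subset_iff.mpr (het (mem_of_mem_erase hxe)))
        (by simpa using (ne_of_mem_erase hxe).symm) (mem_singleton_self x), ?_⟩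
      rw [← hx, insert_erase hve]
    · rintro ⟨x, hx, rfl⟩
      obtain ⟨t, ht, hvt, hxt⟩ := hf.exists_mem_of_mem_link hx
      exact ⟨⟨t, ht, by simp [insert_subset_iff, hvt, hxt],
        card_pair fun hvx => hf.v_notMem_link (hvx ▸ hx)⟩, mem_insert_self v _⟩
  rw [himage, card_image_of_injOn, hf.card_link]
  intro x hx y _ hxy
  have : x ∈ ({v, y} : Finset ℕ) := by rw [← show ({v, x} : Finset ℕ) = {v, y} from hxy]; simp
  exact mem_singleton.mp ((mem_insert.mp this).resolve_left
    fun hxv => hf.v_notMem_link (hxv ▸ hx))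

lemma eulerChar_invT (hf : FanAt K v a b c) (hL : ({a, b, c} : Finset ℕ) ∉ K) :
    eulerChar (invT K v) = eulerChar K := by
  have hV : (vertices (invT K v)).card + 1 = (vertices K).card := by
    rw [hf.vertices_invT, card_erase_add_one (show v ∈ vertices K from
      mem_biUnion.mpr ⟨_, hf.vab_mem, by simp⟩)]
  have hE : 3 + (edges (invT K v)).card = (edges K).card := by
    rw [hf.edges_invT, ← hf.card_filter_mem_edges, card_filter_add_card_filter_not]
  have hT : (invT K v).card + 2 = K.card := by
    rw [invT, hf.linkV_eq, card_insert_of_notMem fun hmem => hL (mem_filter.mp hmem).1,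
      ← card_filter_add_card_filter_not (s := K) (v ∈ ·), hf.card_star]
    omega
  simp only [eulerChar]
  omega

/-- Coherence across the edge `vb`. -/
lemma mem_dedges_next_of_isOrientation (hf : FanAt K v a b c) (ho : IsOrientation K o)
    (hab : (a, b) ∈ dedges (o {v, a, b})) : (b, c) ∈ dedges (o {v, b, c}) := by
  have hbv := mem_dedges_next (ho.1 _ hf.vab_mem) hf.card_vab hab (by simp) hf.v_ne_a hf.v_ne_b
  have hvb := (mem_dedges_or_swap (ho.1 _ hf.cycle.vab_mem) hf.cycle.card_vab (by simp) (by simp)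
    hf.v_ne_b).resolve_right (ho.2 _ hf.vab_mem _ hf.cycle.vab_mem hf.vab_ne_vbc _ hbv)
  exact mem_dedges_next (ho.1 _ hf.cycle.vab_mem) hf.cycle.card_vab hvb (by simp)
    hf.v_ne_c.symm hf.b_ne_c.symm

lemma orientable_invT_of_mem_dedges (hf : FanAt K v a b c) (ho : IsOrientation K o)
    (hab : (a, b) ∈ dedges (o {v, a, b})) : Orientable (invT K v) := by
  have hbc := hf.mem_dedges_next_of_isOrientation ho hab
  have hca := hf.cycle.mem_dedges_next_of_isOrientation ho hbc
  have hrim : ∀ p ∈ dedges (a, b, c), ∃ t ∈ K, v ∈ t ∧ p ∈ dedges (o t) := by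
    intro p hp
    simp only [dedges, mem_insert, mem_singleton] at hp
    rcases hp with rfl | rfl | rfl
    exacts [⟨_, hf.vab_mem, by simp, hab⟩, ⟨_, hf.cycle.vab_mem, by simp, hbc⟩,
      ⟨_, hf.cycle.cycle.vab_mem, by simp, hca⟩]
  rw [invT, hf.linkV_eq, insert_eq]
  refine IsOrientation.orientable_union (o₁ := fun _ => (a, b, c))
    ⟨fun t ht => (mem_singleton.mp ht).symm ▸ rfl, fun t₁ h₁ t₂ h₂ hne =>
      absurd ((mem_singleton.mp h₁).trans (mem_singleton.mp h₂).symm) hne⟩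
    (ho.mono (filter_subset _ _)) fun _ _ t ht _ p hp hp' => ?_
  obtain ⟨s, hs, hvs, hps⟩ := hrim p hp
  obtain ⟨htK, hvt⟩ := mem_filter.mp ht
  exact ho.2 s hs t htK (fun heq => hvt (heq ▸ hvs)) p hps hp'

lemma orientable_invT (hf : FanAt K v a b c) (ho : Orientable K) : Orientable (invT K v) := by
  obtain ⟨o, ho⟩ := ho
  rcases mem_dedges_or_swap (ho.1 _ hf.vab_mem) hf.card_vab (by simp) (by simp) hf.a_ne_b
    with hab | hba
  · exact hf.orientable_invT_of_mem_dedges ho hab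
  · exact hf.swap.orientable_invT_of_mem_dedges ho (by rwa [pair_comm])

lemma orientable_of_invT_of_mem_dedges (hf : FanAt K v a b c) (hL : ({a, b, c} : Finset ℕ) ∉ K)
    (ho : IsOrientation (invT K v) o) (hab : (a, b) ∈ dedges (o {a, b, c})) : Orientable K := by
  have hoL := ho.1 _ hf.link_mem_invT
  have hbc := mem_dedges_next hoL hf.card_link hab (by simp) hf.a_ne_c.symm hf.b_ne_c.symm
  have hca := mem_dedges_next hoL hf.card_link hbc (by simp) hf.a_ne_b hf.a_ne_c
  have hcone : ∀ t ∈ K.filter (v ∈ ·), ∀ p ∈ dedges (coneOrientation v a b c t),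
      p ∈ dedges (o {a, b, c}) ∨ v = p.1 ∨ v = p.2 := by
    rw [hf.star_eq]
    simp only [mem_insert, mem_singleton]
    rintro t (rfl | rfl | rfl) p hp <;>
      simp [coneOrientation, dedges, hf.v_ne_a.symm, hf.v_ne_b.symm, hf.a_ne_b, hf.b_ne_c,
        hf.a_ne_c, hf.a_ne_b.symm] at hp <;>
      rcases hp with rfl | rfl | rfl <;> simp [hab, hbc, hca]
  rw [← filter_union_filter_not_eq (v ∈ ·) K]
  refine IsOrientation.orientable_union (hf.star_eq ▸ isOrientation_coneOrientation hf.v_ne_a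
    hf.v_ne_b hf.v_ne_c hf.a_ne_b hf.b_ne_c hf.a_ne_c)
    (ho.mono fun t ht => hf.mem_invT_of_mem (mem_filter.mp ht).1 (mem_filter.mp ht).2)
    fun s hs t ht _ p hp hp' => ?_
  obtain ⟨htK, hvt⟩ := mem_filter.mp ht
  rcases hcone s hs p hp with hpL | hv | hv
  · exact ho.2 _ hf.link_mem_invT t (hf.mem_invT_of_mem htK hvt)
      (fun heq => hL (heq ▸ htK)) p hpL hp'
  · exact hvt (ho.1 t (hf.mem_invT_of_mem htK hvt) ▸ hv ▸ (mem_of_mem_dedges hp').1)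
  · exact hvt (ho.1 t (hf.mem_invT_of_mem htK hvt) ▸ hv ▸ (mem_of_mem_dedges hp').2)

lemma orientable_of_invT (hf : FanAt K v a b c) (hL : ({a, b, c} : Finset ℕ) ∉ K)
    (ho : Orientable (invT K v)) : Orientable K := by
  obtain ⟨o, ho⟩ := ho
  rcases mem_dedges_or_swap (ho.1 _ hf.link_mem_invT) hf.card_link (by simp) (by simp) hf.a_ne_b
    with hab | hba
  · exact hf.orientable_of_invT_of_mem_dedges hL ho hab
  · exact hf.swap.orientable_of_invT_of_mem_dedges (by rwa [insert_comm]) ho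
      (by rwa [insert_comm])

end FanAt

theorem invT_move_applicable_general (K : Complex) (h : IsClosedSurface K)
    (hK : ¬ Iso K tetra) (v : ℕ)
    (h3 : valence K v = 3) :
    linkV K v ∉ K ∧ InvTStep K (invT K v) ∧
      IsClosedSurface (invT K v) ∧ SameSurface (invT K v) K := by
  obtain ⟨a, b, c, hf⟩ := h.exists_fanAt h3
  have hL : ({a, b, c} : Finset ℕ) ∉ K := hf.link_notMem h hK
  have hlink : linkV K v ∉ K := hf.linkV_eq ▸ hL
  exact ⟨hlink, ⟨v, h3, hlink, rfl⟩, hf.isClosedSurface_invT h hL, hf.eulerChar_invT hL,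
    hf.orientable_of_invT hL, hf.orientable_invT⟩

/-- in a closed triangulated surface other than the tetrahedron
boundary, the link of a 3-valent vertex does not bound a triangle, hence the
inverse T-move removing it applies (and yields a triangulation of the same
surface). -/
theorem invT_move_applicable (K : Complex) (h : IsClosedSurface K)
    (hK : ¬ Iso K tetra) (v : ℕ) (hv : v ∈ vertices K)
    (h3 : valence K v = 3) :
    linkV K v ∉ K ∧ InvTStep K (invT K v) ∧
      IsClosedSurface (invT K v) ∧ SameSurface (invT K v) K :=
  invT_move_applicable_general K h hK v h3

end Tri
end

section
/- Every triangulation of a closed surface has exactly one root: there is a unique triangulation R obtainable from T by a sequence of inverse T-moves such that no inverse T-move can be applied to R. -/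
/-!
Inverse T-moves remove two triangles each and preserve closed surfaces (the star of a
3-valent vertex `v` is the cone over the boundary of the triangle spanned by its link, and
the move replaces that cone by the triangle), so roots exist. Uniqueness is Newman's lemma
up to relabelling. If a 3-valent vertex `w` lies in the link of a 3-valent vertex `v`, the link
of `v` already bounds a triangle, so two removable vertices `v ≠ w` are not adjacent. Their
moves then commute, unless `v` and `w` have the same link, in which case the transposition of
`v` and `w` is an automorphism exchanging the two results.
-/

namespace Relation

variable {α : Type*} {r e : α → α → Prop} {P : α → Prop} {μ : α → ℕ}

def IsNormalFormOf (r : α → α → Prop) (n a : α) : Prop :=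
  ReflTransGen r a n ∧ ∀ x, ¬ r n x

theorem ReflTransGen.invariant (hP : ∀ a b, P a → r a b → P b) {a b : α}
    (h : ReflTransGen r a b) (ha : P a) : P b := by
  induction h with
  | refl => exact ha
  | tail _ hbc ih => exact hP _ _ ih hbc

theorem exists_isNormalFormOf (hP : ∀ a b, P a → r a b → P b)
    (hμ : ∀ a b, P a → r a b → μ b < μ a) {a : α} (ha : P a) :
    ∃ n, IsNormalFormOf r n a := by
  induction hm : μ a using Nat.strong_induction_on generalizing a with
  | _ m ih =>
    by_cases hstep : ∃ b, r a b
    · obtain ⟨b, hab⟩ := hstep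
      obtain ⟨n, hbn, hn⟩ := ih (μ b) (hm ▸ hμ a b ha hab) (hP a b ha hab) rfl
      exact ⟨n, .head hab hbn, hn⟩
    · exact ⟨a, .refl, not_exists.1 hstep⟩

theorem ReflTransGen.exists_of_bisim
    (hbisim : ∀ a b a', e a b → r a a' → ∃ b', r b b' ∧ e a' b')
    {a a' b : α} (h : ReflTransGen r a a') (hab : e a b) :
    ∃ b', ReflTransGen r b b' ∧ e a' b' := by
  induction h with
  | refl => exact ⟨b, .refl, hab⟩
  | tail _ hcd ih =>
    obtain ⟨c', hbc', hcc'⟩ := ih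
    obtain ⟨d', hc'd', hdd'⟩ := hbisim _ _ _ hcc' hcd
    exact ⟨d', hbc'.tail hc'd', hdd'⟩

theorem IsNormalFormOf.exists_of_bisim (he : Equivalence e)
    (hbisim : ∀ a b a', e a b → r a a' → ∃ b', r b b' ∧ e a' b') {n a b : α}
    (h : IsNormalFormOf r n a) (hab : e a b) :
    ∃ n', IsNormalFormOf r n' b ∧ e n n' := by
  obtain ⟨n', hbn', hnn'⟩ := h.1.exists_of_bisim hbisim hab
  refine ⟨n', ⟨hbn', fun x hx => ?_⟩, hnn'⟩
  obtain ⟨y, hny, -⟩ := hbisim _ _ _ (he.symm hnn') hx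
  exact h.2 y hny

theorem IsNormalFormOf.eq_of_forall_not {n a : α} (h : IsNormalFormOf r n a)
    (ha : ∀ b, ¬ r a b) : n = a := by
  rcases h.1.cases_head with rfl | ⟨b, hab, -⟩
  · rfl
  · exact absurd hab (ha b)

/-- Newman's lemma modulo a bisimulation `e`. -/
theorem IsNormalFormOf.equiv (he : Equivalence e)
    (hbisim : ∀ a b a', e a b → r a a' → ∃ b', r b b' ∧ e a' b')
    (hP : ∀ a b, P a → r a b → P b) (hμ : ∀ a b, P a → r a b → μ b < μ a)
    (hloc : ∀ a b c, P a → r a b → r a c →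
      e b c ∨ ∃ d, ReflTransGen r b d ∧ ReflTransGen r c d)
    {a n n' : α} (ha : P a) (hn : IsNormalFormOf r n a) (hn' : IsNormalFormOf r n' a) :
    e n n' := by
  induction hm : μ a using Nat.strong_induction_on generalizing a n n' with
  | _ m ih =>
    rcases hn.1.cases_head with rfl | ⟨b, hab, hbn⟩
    · exact hn'.eq_of_forall_not hn.2 ▸ he.refl _
    rcases hn'.1.cases_head with rfl | ⟨c, hac, hcn'⟩
    · exact absurd hab (hn'.2 b)
    have hb := hP a b ha hab
    have ihb : ∀ k, IsNormalFormOf r k b → e n k := fun k hk =>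
      ih (μ b) (hm ▸ hμ a b ha hab) hb ⟨hbn, hn.2⟩ hk rfl
    have ihc : ∀ k, IsNormalFormOf r k c → e n' k := fun k hk =>
      ih (μ c) (hm ▸ hμ a c ha hac) (hP a c ha hac) ⟨hcn', hn'.2⟩ hk rfl
    rcases hloc a b c ha hab hac with hbc | ⟨d, hbd, hcd⟩
    · obtain ⟨k, hk, hn'k⟩ :=
        IsNormalFormOf.exists_of_bisim he hbisim ⟨hcn', hn'.2⟩ (he.symm hbc)
      exact he.trans (ihb k hk) (he.symm hn'k)
    · obtain ⟨k, hk⟩ := exists_isNormalFormOf hP hμ (hbd.invariant hP hb)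
      exact he.trans (ihb k ⟨hbd.trans hk.1, hk.2⟩) (he.symm (ihc k ⟨hcd.trans hk.1, hk.2⟩))

end Relation

namespace Tri

open Finset Relation

variable {K : Complex} {s t e : Finset ℕ} {v w x : ℕ}

lemma mem_edges : e ∈ edges K ↔ ∃ t ∈ K, e ⊆ t ∧ e.card = 2 := by
  simp only [edges, mem_biUnion, mem_powersetCard]

lemma mem_linkV : x ∈ linkV K v ↔ x ≠ v ∧ ∃ t ∈ K, v ∈ t ∧ x ∈ t := by
  simp only [linkV, mem_erase, mem_biUnion, mem_filter, id, and_assoc]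

lemma mem_linkV_comm (h : x ∈ linkV K v) : v ∈ linkV K x := by
  obtain ⟨hxv, t, ht, hvt, hxt⟩ := mem_linkV.1 h
  exact mem_linkV.2 ⟨hxv.symm, t, ht, hxt, hvt⟩

lemma notMem_linkV_self : v ∉ linkV K v := notMem_erase v _

lemma erase_subset_linkV (ht : t ∈ K) (hvt : v ∈ t) : t.erase v ⊆ linkV K v :=
  fun _ hx => mem_linkV.2 ⟨ne_of_mem_erase hx, t, ht, hvt, mem_of_mem_erase hx⟩

lemma IsSurface.card_erase (hK : IsSurface K) (ht : t ∈ K) (hvt : v ∈ t) :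
    (t.erase v).card = 2 := by
  rw [card_erase_of_mem hvt, hK.card3 t ht]

lemma adj_comm (h : adj K s t) : adj K t s :=
  ⟨h.2.1, h.1, by rw [inter_comm]; exact h.2.2⟩

lemma mem_invT : t ∈ invT K v ↔ t = linkV K v ∨ t ∈ K ∧ v ∉ t := by
  simp only [invT, mem_insert, mem_filter]

lemma notMem_of_mem_invT (ht : t ∈ invT K v) : v ∉ t := by
  rcases mem_invT.1 ht with rfl | ⟨-, hvt⟩
  exacts [notMem_linkV_self, hvt]

lemma card_invT (hv : valence K v = 3) (hL : linkV K v ∉ K) :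
    (invT K v).card + 2 = K.card := by
  have hsplit := card_filter_add_card_filter_not (s := K) (fun t => v ∈ t)
  rw [invT, card_insert_of_notMem fun h => hL (mem_filter.1 h).1]
  change valence K v + _ = _ at hsplit
  omega

lemma InvTStep.card_lt {K' : Complex} (h : InvTStep K K') : K'.card < K.card := by
  obtain ⟨v, hv, hL, rfl⟩ := h
  have := card_invT hv hL
  omega

def starCollapse (K : Complex) (v : ℕ) (t : Finset ℕ) : Finset ℕ :=
  if v ∈ t then linkV K v else t

lemma starCollapse_mem (ht : t ∈ K) : starCollapse K v t ∈ invT K v := by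
  unfold starCollapse
  split_ifs with hvt
  exacts [mem_invT.2 (Or.inl rfl), mem_invT.2 (Or.inr ⟨ht, hvt⟩)]

lemma subset_starCollapse (hve : v ∉ e) (het : e ⊆ t) (ht : t ∈ K) :
    e ⊆ starCollapse K v t := by
  unfold starCollapse
  split_ifs with hvt
  exacts [(subset_erase.2 ⟨het, hve⟩).trans (erase_subset_linkV ht hvt), het]

lemma mem_starCollapse (hs : s ∈ K) (hws : w ∈ s) (hwv : w ≠ v) :
    w ∈ starCollapse K v s := by
  unfold starCollapse
  split_ifs with hvs
  exacts [erase_subset_linkV hs hvs (mem_erase.2 ⟨hwv, hws⟩), hws]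

lemma exists_starCollapse_eq (ht : t ∈ invT K v) (hx : x ∈ t) :
    ∃ p ∈ K, x ∈ p ∧ starCollapse K v p = t := by
  rcases mem_invT.1 ht with rfl | ⟨htK, hvt⟩
  · obtain ⟨-, p, hp, hvp, hxp⟩ := mem_linkV.1 hx
    exact ⟨p, hp, hxp, if_pos hvp⟩
  · exact ⟨t, htK, hx, if_neg hvt⟩

lemma IsSurface.injOn_starCollapse (hK : IsSurface K) (hL : linkV K v ∉ K) (hve : v ∉ e)
    (he2 : e.card = 2) : Set.InjOn (starCollapse K v) (K.filter (e ⊆ ·) : Set (Finset ℕ)) := by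
  have hcone : ∀ s ∈ K.filter (e ⊆ ·), v ∈ s → s = insert v e := fun s hs hvs => by
    obtain ⟨hsK, hes⟩ := mem_filter.1 hs
    rw [← insert_erase hvs, eq_of_subset_of_card_le (subset_erase.2 ⟨hes, hve⟩)
      (by rw [hK.card_erase hsK hvs, he2])]
  intro s hs s' hs' h
  simp only [starCollapse] at h
  split_ifs at h with hvs hvs'
  · rw [hcone s hs hvs, hcone s' hs' hvs']
  · exact absurd (h ▸ (mem_filter.1 hs').1) hL
  · exact absurd (h ▸ (mem_filter.1 hs).1) hL
  · exact h

lemma filter_mem_invT (hvw : v ≠ w) (hw : w ∉ linkV K v) :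
    (invT K v).filter (w ∈ ·) = K.filter (w ∈ ·) := by
  ext t
  simp only [mem_filter, mem_invT]
  constructor
  · rintro ⟨rfl | ⟨ht, -⟩, hwt⟩
    exacts [absurd hwt hw, ⟨ht, hwt⟩]
  · rintro ⟨ht, hwt⟩
    exact ⟨Or.inr ⟨ht, fun hvt => hw (mem_linkV.2 ⟨hvw.symm, t, ht, hvt, hwt⟩)⟩, hwt⟩

lemma valence_invT (hvw : v ≠ w) (hw : w ∉ linkV K v) : valence (invT K v) w = valence K w := by
  rw [valence, filter_mem_invT hvw hw, valence]

lemma linkV_invT (hvw : v ≠ w) (hw : w ∉ linkV K v) : linkV (invT K v) w = linkV K w := by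
  rw [linkV, filter_mem_invT hvw hw, linkV]

lemma invT_invT_eq (hvw : v ≠ w) (hw : w ∉ linkV K v) : invT (invT K v) w =
    insert (linkV K w) (insert (linkV K v) (K.filter fun t => v ∉ t ∧ w ∉ t)) := by
  rw [invT, linkV_invT hvw hw, invT, filter_insert, if_pos hw, filter_filter]

lemma invT_comm (hvw : v ≠ w) (hw : w ∉ linkV K v) (hv : v ∉ linkV K w) :
    invT (invT K v) w = invT (invT K w) v := by
  rw [invT_invT_eq hvw hw, invT_invT_eq hvw.symm hv, insert_comm]
  simp only [and_comm]

lemma invTStep_invT (hvw : v ≠ w) (hwv : w ∉ linkV K v) (hw : valence K w = 3)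
    (hLw : linkV K w ∉ K) (hL : linkV K w ≠ linkV K v) :
    InvTStep (invT K v) (invT (invT K v) w) :=
  ⟨w, by rw [valence_invT hvw hwv, hw], by
    rw [linkV_invT hvw hwv, mem_invT]
    exact fun h => h.elim hL fun h => hLw h.1, rfl⟩

def relabel (f : ℕ → ℕ) (K : Complex) : Complex := K.image (Finset.image f)

lemma relabel_id : relabel id K = K := by
  conv_rhs => rw [← image_id (s := K)]
  exact image_congr fun t _ => image_id

lemma relabel_relabel (f g : ℕ → ℕ) : relabel f (relabel g K) = relabel (f ∘ g) K := by
  simp only [relabel, image_image, Function.comp_def]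

/-- Unlike `Iso`, this is visibly an equivalence relation and is respected by inverse
T-moves. -/
def PermIso (K₁ K₂ : Complex) : Prop := ∃ σ : Equiv.Perm ℕ, relabel σ K₁ = K₂

lemma PermIso.iso {K₁ K₂ : Complex} (h : PermIso K₁ K₂) : Iso K₁ K₂ :=
  let ⟨σ, hσ⟩ := h
  ⟨σ, σ.injective.injOn, hσ⟩

lemma permIso_equivalence : Equivalence PermIso where
  refl _ := ⟨1, relabel_id⟩
  symm := fun ⟨σ, h⟩ => ⟨σ⁻¹, by
    rw [← h, relabel_relabel, Equiv.Perm.coe_inv, Equiv.symm_comp_self, relabel_id]⟩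
  trans := fun ⟨σ, h⟩ ⟨τ, h'⟩ => ⟨τ * σ, by
    rw [← h', ← h, relabel_relabel, Equiv.Perm.coe_mul]⟩

section Relabel

variable {f : ℕ → ℕ} (hf : f.Injective)
include hf

lemma filter_mem_relabel : (relabel f K).filter (f v ∈ ·) = relabel f (K.filter (v ∈ ·)) := by
  simp only [relabel, filter_image, hf.mem_finset_image]

lemma filter_notMem_relabel :
    (relabel f K).filter (f v ∉ ·) = relabel f (K.filter (v ∉ ·)) := by
  simp only [relabel, filter_image, hf.mem_finset_image]

lemma valence_relabel : valence (relabel f K) (f v) = valence K v := by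
  rw [valence, filter_mem_relabel hf, relabel, card_image_of_injective _ (image_injective hf),
    valence]

lemma linkV_relabel : linkV (relabel f K) (f v) = (linkV K v).image f := by
  rw [linkV, filter_mem_relabel hf, linkV, image_erase hf, relabel, biUnion_image, image_biUnion]
  rfl

lemma invT_relabel : invT (relabel f K) (f v) = relabel f (invT K v) := by
  rw [invT, linkV_relabel hf, filter_notMem_relabel hf, invT, relabel, relabel, image_insert]

lemma image_mem_relabel : t.image f ∈ relabel f K ↔ t ∈ K :=
  (image_injective hf).mem_finset_image

lemma InvTStep.relabel {K' : Complex} (h : InvTStep K K') :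
    InvTStep (relabel f K) (relabel f K') := by
  obtain ⟨v, hv, hL, rfl⟩ := h
  refine ⟨f v, by rw [valence_relabel hf, hv], ?_, (invT_relabel hf).symm⟩
  rwa [linkV_relabel hf, image_mem_relabel hf]

end Relabel

lemma PermIso.exists_invTStep {K' L : Complex} (hKL : PermIso K L) (h : InvTStep K K') :
    ∃ L', InvTStep L L' ∧ PermIso K' L' := by
  obtain ⟨σ, rfl⟩ := hKL
  exact ⟨_, h.relabel σ.injective, σ, rfl⟩

lemma image_swap_of_notMem (hv : v ∉ t) (hw : w ∉ t) : t.image (Equiv.swap v w) = t := by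
  conv_rhs => rw [← image_id (s := t)]
  exact image_congr fun x hx =>
    Equiv.swap_apply_of_ne_of_ne (ne_of_mem_of_not_mem hx hv) (ne_of_mem_of_not_mem hx hw)

namespace IsClosedSurface

variable (hK : IsClosedSurface K)
include hK

lemma card_filter_pair_subset (hx : x ∈ linkV K v) : #{t ∈ K | {v, x} ⊆ t} = 2 := by
  obtain ⟨hxv, t, ht, hvt, hxt⟩ := mem_linkV.1 hx
  exact hK.2 _ (mem_edges.2 ⟨t, ht, insert_subset hvt (singleton_subset_iff.2 hxt),
    card_pair hxv.symm⟩)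

/-- Each link vertex lies in two of the three triangles around `v`, and each of these triangles
meets the link in two vertices, so the link has `3 * 2 / 2` vertices. -/
lemma card_linkV (hv : valence K v = 3) : (linkV K v).card = 3 := by
  have hdeg : ∀ x ∈ linkV K v, #{t ∈ K.filter (v ∈ ·) | x ∈ t} = 2 := fun x hx => by
    rw [filter_filter, ← hK.card_filter_pair_subset hx]
    simp only [insert_subset_iff, singleton_subset_iff]
  have hmeet : ∀ t ∈ K.filter (v ∈ ·), #(linkV K v ∩ t) = 2 := fun t ht => by
    obtain ⟨htK, hvt⟩ := mem_filter.1 ht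
    rw [← hK.1.card_erase htK hvt]
    congr 1
    ext x
    simp only [mem_inter, mem_erase]
    exact ⟨fun ⟨hxL, hxt⟩ => ⟨ne_of_mem_of_not_mem hxL notMem_linkV_self, hxt⟩,
      fun hx => ⟨erase_subset_linkV htK hvt (mem_erase.2 hx), hx.2⟩⟩
  have := sum_card_inter hdeg
  rw [sum_congr rfl hmeet, sum_const, smul_eq_mul] at this
  change valence K v * 2 = _ at this
  omega

/-- The three triangles around `v` give three distinct pairs of link vertices, which is all of
them: the star of `v` is the cone over the boundary of the triangle spanned by its link. -/
lemma insert_mem_of_subset_linkV (hv : valence K v = 3) (he : e ⊆ linkV K v)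
    (he2 : e.card = 2) : insert v e ∈ K := by
  have hinj : Set.InjOn (·.erase v) (K.filter (v ∈ ·) : Set (Finset ℕ)) :=
    fun s hs s' hs' h => by
      rw [← insert_erase (mem_filter.1 hs).2, ← insert_erase (mem_filter.1 hs').2]
      exact congrArg (insert v) h
  have hsub : (K.filter (v ∈ ·)).image (·.erase v) ⊆ (linkV K v).powersetCard 2 := by
    simp only [image_subset_iff, mem_filter, mem_powersetCard, and_imp]
    exact fun t ht hvt => ⟨erase_subset_linkV ht hvt, hK.1.card_erase ht hvt⟩
  have heq := eq_of_subset_of_card_le hsub (by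
    rw [card_image_of_injOn hinj, card_powersetCard, hK.card_linkV hv]; exact hv.ge)
  obtain ⟨t, ht, rfl⟩ := mem_image.1 (heq ▸ mem_powersetCard.2 ⟨he, he2⟩)
  rw [insert_erase (mem_filter.1 ht).2]
  exact (mem_filter.1 ht).1

lemma insert_pair_mem (hv : valence K v = 3) {x y : ℕ} (hx : x ∈ linkV K v)
    (hy : y ∈ linkV K v) (hxy : x ≠ y) : {v, x, y} ∈ K :=
  hK.insert_mem_of_subset_linkV hv (insert_subset hx (singleton_subset_iff.2 hy)) (card_pair hxy)

lemma linkV_mem_of_mem_linkV (hv : valence K v = 3) (hw : valence K w = 3)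
    (hwv : w ∈ linkV K v) : linkV K v ∈ K := by
  have hsub : (linkV K v).erase w ⊆ linkV K w := fun x hx => by
    obtain ⟨hxw, hxL⟩ := mem_erase.1 hx
    exact mem_linkV.2 ⟨hxw, _, hK.insert_pair_mem hv hwv hxL hxw.symm, by simp, by simp⟩
  have := hK.insert_mem_of_subset_linkV hw hsub
    (by rw [card_erase_of_mem hwv, hK.card_linkV hv])
  rwa [insert_erase hwv] at this

lemma image_starCollapse_filter (hv : valence K v = 3) (hve : v ∉ e) (he2 : e.card = 2) :
    (K.filter (e ⊆ ·)).image (starCollapse K v) = (invT K v).filter (e ⊆ ·) := by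
  ext t
  simp only [mem_image, mem_filter]
  constructor
  · rintro ⟨s, ⟨hs, hes⟩, rfl⟩
    exact ⟨starCollapse_mem hs, subset_starCollapse hve hes hs⟩
  · rintro ⟨ht, het⟩
    rcases mem_invT.1 ht with rfl | ⟨htK, hvt⟩
    · exact ⟨insert v e, ⟨hK.insert_mem_of_subset_linkV hv het he2, subset_insert v e⟩,
        if_pos (mem_insert_self v e)⟩
    · exact ⟨t, ⟨htK, het⟩, if_neg hvt⟩

lemma adj_linkV_invT (hv : valence K v = 3) (hL : linkV K v ∉ K) (h : adj K s t)
    (hvs : v ∈ s) (hvt : v ∉ t) : adj (invT K v) (linkV K v) t := by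
  obtain ⟨hs, ht, h2⟩ := h
  refine ⟨mem_invT.2 (Or.inl rfl), mem_invT.2 (Or.inr ⟨ht, hvt⟩), le_antisymm ?_ ?_⟩
  · have hsub : linkV K v ∩ t ⊂ linkV K v := by
      refine ssubset_of_subset_of_ne inter_subset_left fun heq => hL ?_
      have hLt : linkV K v ⊆ t := heq ▸ inter_subset_right
      rwa [eq_of_subset_of_card_le hLt (by rw [hK.1.card3 t ht, hK.card_linkV hv])]
    have := card_lt_card hsub
    rw [hK.card_linkV hv] at this
    omega
  · have hst : s ∩ t ⊆ s.erase v := fun x hx =>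
      mem_erase.2 ⟨fun hxv => hvt (hxv ▸ (mem_inter.1 hx).2), (mem_inter.1 hx).1⟩
    calc 2 = (s ∩ t).card := h2.symm
      _ ≤ _ := card_le_card fun x hx =>
          mem_inter.2 ⟨erase_subset_linkV hs hvs (hst hx), (mem_inter.1 hx).2⟩

lemma adj_starCollapse (hv : valence K v = 3) (hL : linkV K v ∉ K) (h : adj K s t) :
    starCollapse K v s = starCollapse K v t ∨
      adj (invT K v) (starCollapse K v s) (starCollapse K v t) := by
  by_cases hvs : v ∈ s <;> by_cases hvt : v ∈ t <;>
    simp only [starCollapse, hvs, hvt, if_true, if_false, true_or]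
  · exact Or.inr (hK.adj_linkV_invT hv hL h hvs hvt)
  · exact Or.inr (adj_comm (hK.adj_linkV_invT hv hL (adj_comm h) hvt hvs))
  · exact Or.inr
      ⟨mem_invT.2 (Or.inr ⟨h.1, hvs⟩), mem_invT.2 (Or.inr ⟨h.2.1, hvt⟩), h.2.2⟩

lemma reflTransGen_adj_starCollapse (hv : valence K v = 3) (hL : linkV K v ∉ K)
    (h : ReflTransGen (adj K) s t) :
    ReflTransGen (adj (invT K v)) (starCollapse K v s) (starCollapse K v t) := by
  refine ReflTransGen.lift' _ (fun s t hst => ?_) _ _ h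
  change ReflTransGen _ (starCollapse K v s) (starCollapse K v t)
  rcases hK.adj_starCollapse hv hL hst with heq | hadj
  exacts [heq ▸ .refl, .single hadj]

lemma reflTransGen_adjAt_starCollapse (hv : valence K v = 3) (hL : linkV K v ∉ K)
    (hwv : w ≠ v) (h : ReflTransGen (adjAt K w) s t) :
    ReflTransGen (adjAt (invT K v) w) (starCollapse K v s) (starCollapse K v t) := by
  refine ReflTransGen.lift' _ (fun s t hst => ?_) _ _ h
  change ReflTransGen _ (starCollapse K v s) (starCollapse K v t)
  obtain ⟨hs, ht, hws, hwt, h2⟩ := hst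
  rcases hK.adj_starCollapse hv hL ⟨hs, ht, h2⟩ with heq | hadj
  exacts [heq ▸ .refl, .single ⟨hadj.1, hadj.2.1, mem_starCollapse hs hws hwv,
    mem_starCollapse ht hwt hwv, hadj.2.2⟩]

lemma image_swap_mem (hw : valence K w = 3) (hvw : v ≠ w) (hL : linkV K v = linkV K w)
    (hwv : w ∉ linkV K v) (ht : t ∈ K) (hvt : v ∈ t) : t.image (Equiv.swap v w) ∈ K := by
  have hwt : w ∉ t := fun hwt => hwv (erase_subset_linkV ht hvt (mem_erase.2 ⟨hvw.symm, hwt⟩))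
  rw [← insert_erase hvt, image_insert, Equiv.swap_apply_left,
    image_swap_of_notMem (notMem_erase v t) fun h => hwt (mem_of_mem_erase h)]
  exact hK.insert_mem_of_subset_linkV hw (hL ▸ erase_subset_linkV ht hvt) (hK.1.card_erase ht hvt)

lemma relabel_swap (hv : valence K v = 3) (hw : valence K w = 3) (hvw : v ≠ w)
    (hL : linkV K v = linkV K w) (hwv : w ∉ linkV K v) : relabel (Equiv.swap v w) K = K := by
  have hvw' : v ∉ linkV K w := fun h => hwv (mem_linkV_comm h)
  have hmaps : ∀ t ∈ K, t.image (Equiv.swap v w) ∈ K := fun t ht => by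
    by_cases hvt : v ∈ t
    · exact hK.image_swap_mem hw hvw hL hwv ht hvt
    by_cases hwt : w ∈ t
    · rw [Equiv.swap_comm]
      exact hK.image_swap_mem hv hvw.symm hL.symm hvw' ht hwt
    · rwa [image_swap_of_notMem hvt hwt]
  exact eq_of_subset_of_card_le (image_subset_iff.2 hmaps)
    (card_image_of_injective _ (image_injective (Equiv.swap v w).injective)).ge

lemma permIso_or_exists_invTStep {K₁ K₂ : Complex} (h₁ : InvTStep K K₁)
    (h₂ : InvTStep K K₂) :
    PermIso K₁ K₂ ∨ ∃ K₃, InvTStep K₁ K₃ ∧ InvTStep K₂ K₃ := by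
  obtain ⟨v, hv, hLv, rfl⟩ := h₁
  obtain ⟨w, hw, hLw, rfl⟩ := h₂
  by_cases hvw : v = w
  · subst hvw
    exact Or.inl (permIso_equivalence.refl _)
  have hwv : w ∉ linkV K v := fun h => hLv (hK.linkV_mem_of_mem_linkV hv hw h)
  have hvw' : v ∉ linkV K w := fun h => hwv (mem_linkV_comm h)
  by_cases hL : linkV K v = linkV K w
  · refine Or.inl ⟨Equiv.swap v w, ?_⟩
    rw [← invT_relabel (Equiv.injective _), Equiv.swap_apply_left,
      hK.relabel_swap hv hw hvw hL hwv]
  · refine Or.inr ⟨_, invTStep_invT hvw hwv hw hLw (Ne.symm hL), ?_⟩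
    rw [invT_comm hvw hwv hvw']
    exact invTStep_invT (Ne.symm hvw) hvw' hv hLv hL

end IsClosedSurface

lemma isClosedSurface_invT (hK : IsClosedSurface K) (hv : valence K v = 3)
    (hL : linkV K v ∉ K) : IsClosedSurface (invT K v) := by
  have hedge : ∀ e ∈ edges (invT K v),
      e ∈ edges K ∧ #{t ∈ invT K v | e ⊆ t} = #{t ∈ K | e ⊆ t} := fun e he => by
    obtain ⟨t, ht, het, he2⟩ := mem_edges.1 he
    have hve : v ∉ e := fun h => notMem_of_mem_invT ht (het h)
    have himg := hK.image_starCollapse_filter hv hve he2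
    obtain ⟨p, hp, -⟩ := mem_image.1 (himg ▸ mem_filter.2 ⟨ht, het⟩)
    exact ⟨mem_edges.2 ⟨p, (mem_filter.1 hp).1, (mem_filter.1 hp).2, he2⟩,
      by rw [← himg, card_image_of_injOn (hK.1.injOn_starCollapse hL hve he2)]⟩
  have htwo : ∀ e ∈ edges (invT K v), #{t ∈ invT K v | e ⊆ t} = 2 := fun e he => by
    rw [(hedge e he).2]
    exact hK.2 e (hedge e he).1
  have hcard3 : ∀ t ∈ invT K v, t.card = 3 := fun t ht => by
    rcases mem_invT.1 ht with rfl | ⟨htK, -⟩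
    exacts [hK.card_linkV hv, hK.1.card3 t htK]
  refine ⟨⟨⟨_, mem_invT.2 (Or.inl rfl)⟩, hcard3, fun e he => (htwo e he).le, ?_, ?_⟩,
    htwo⟩
  · intro w t₁ ht₁ t₂ ht₂ hw₁ hw₂
    have hwv : w ≠ v := by rintro rfl; exact notMem_of_mem_invT ht₁ hw₁
    obtain ⟨p₁, hp₁, hwp₁, rfl⟩ := exists_starCollapse_eq ht₁ hw₁
    obtain ⟨p₂, hp₂, hwp₂, rfl⟩ := exists_starCollapse_eq ht₂ hw₂
    exact hK.reflTransGen_adjAt_starCollapse hv hL hwv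
      (hK.1.link_conn w p₁ hp₁ p₂ hp₂ hwp₁ hwp₂)
  · intro t₁ ht₁ t₂ ht₂
    obtain ⟨x₁, hx₁⟩ := card_pos.1 (by rw [hcard3 t₁ ht₁]; omega)
    obtain ⟨x₂, hx₂⟩ := card_pos.1 (by rw [hcard3 t₂ ht₂]; omega)
    obtain ⟨p₁, hp₁, -, rfl⟩ := exists_starCollapse_eq ht₁ hx₁
    obtain ⟨p₂, hp₂, -, rfl⟩ := exists_starCollapse_eq ht₂ hx₂
    exact hK.reflTransGen_adj_starCollapse hv hL (hK.1.conn p₁ hp₁ p₂ hp₂)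

lemma InvTStep.isClosedSurface {K' : Complex} (hK : IsClosedSurface K) (h : InvTStep K K') :
    IsClosedSurface K' := by
  obtain ⟨v, hv, hL, rfl⟩ := h
  exact isClosedSurface_invT hK hv hL

/-- every closed triangulated surface has exactly one root
(up to simplicial isomorphism). -/
theorem root_exists_unique (K : Complex) (h : IsClosedSurface K) :
    ∃ R, IsRootOf R K ∧ ∀ R', IsRootOf R' K → Iso R' R := by
  have hP : ∀ K K', IsClosedSurface K → InvTStep K K' → IsClosedSurface K' :=
    fun _ _ hK hstep => hstep.isClosedSurface hK
  have hμ : ∀ K K' : Complex, IsClosedSurface K → InvTStep K K' → K'.card < K.card :=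
    fun _ _ _ hstep => hstep.card_lt
  have hloc : ∀ K K₁ K₂, IsClosedSurface K → InvTStep K K₁ → InvTStep K K₂ →
      PermIso K₁ K₂ ∨
        ∃ K₃, ReflTransGen InvTStep K₁ K₃ ∧ ReflTransGen InvTStep K₂ K₃ :=
    fun _ _ _ hK h₁ h₂ => (hK.permIso_or_exists_invTStep h₁ h₂).imp_right
      fun ⟨K₃, h₁₃, h₂₃⟩ => ⟨K₃, .single h₁₃, .single h₂₃⟩
  obtain ⟨R, hR⟩ := exists_isNormalFormOf hP hμ h
  exact ⟨R, hR, fun R' hR' => (IsNormalFormOf.equiv permIso_equivalence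
    (fun _ _ _ => PermIso.exists_invTStep) hP hμ hloc h hR' hR).iso⟩

end Tri
end

section
/- In a triangulation of a closed surface that is not the boundary of the tetrahedron, any two distinct 3-valent vertices are non-adjacent, and hence their open stars are disjoint. -/
/-! If two 3-valent vertices `v, w` span an edge, let `vwx` and `vwy` be the two triangles through
it. The star of `v` has a third triangle, and the other triangles through the edges `vx` and `vy`
must both be that one, so it is `vxy`; likewise `wxy` is a triangle. The four triangles
`Q.image Q.erase` on `Q = {v, w, x, y}` contain each of their edges twice, so no triangle of the
closed surface `K` can be attached to them and, `K` being connected, they are all of `K`. -/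

namespace Tri

open Finset

lemma eq_triple_of_mem {α : Type*} [DecidableEq α] {s : Finset α} (hs : s.card = 3) {a b c : α}
    (ha : a ∈ s) (hb : b ∈ s) (hc : c ∈ s) (hab : a ≠ b) (hac : a ≠ c) (hbc : b ≠ c) :
    s = {a, b, c} :=
  (eq_of_subset_of_card_le (by simp [insert_subset_iff, *])
    (by rw [hs, card_eq_three.2 ⟨a, b, c, hab, hac, hbc, rfl⟩])).symm

lemma exists_eq_triple_of_mem {α : Type*} [DecidableEq α] {s : Finset α} (hs : s.card = 3)
    {a b : α} (ha : a ∈ s) (hb : b ∈ s) (hab : a ≠ b) : ∃ c, c ≠ a ∧ c ≠ b ∧ s = {a, b, c} := by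
  obtain ⟨c, hc⟩ : (s \ {a, b}).Nonempty := by
    rw [← card_pos, card_sdiff_of_subset (by simp [insert_subset_iff, ha, hb]), hs, card_pair hab]
    norm_num
  simp only [mem_sdiff, mem_insert, mem_singleton, not_or] at hc
  exact ⟨c, hc.2.1, hc.2.2, eq_triple_of_mem hs ha hb hc.1 hab (Ne.symm hc.2.1) (Ne.symm hc.2.2)⟩

section

variable {K : Complex}

lemma pair_mem_edges {t : Finset ℕ} (ht : t ∈ K) {p q : ℕ} (hp : p ∈ t) (hq : q ∈ t)
    (hpq : p ≠ q) : ({p, q} : Finset ℕ) ∈ edges K :=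
  mem_biUnion.2 ⟨t, ht, mem_powersetCard.2 ⟨insert_subset hp (singleton_subset_iff.2 hq),
    card_pair hpq⟩⟩

lemma exists_mem_of_pair_mem_edges {p q : ℕ} (h : ({p, q} : Finset ℕ) ∈ edges K) :
    ∃ t ∈ K, p ∈ t ∧ q ∈ t := by
  obtain ⟨t, ht, hpq⟩ := mem_biUnion.1 h
  exact ⟨t, ht, (mem_powersetCard.1 hpq).1 (by simp), (mem_powersetCard.1 hpq).1 (by simp)⟩

lemma IsClosedSurface.exists_ne_of_mem (hK : IsClosedSurface K) {t : Finset ℕ} (ht : t ∈ K)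
    {p q : ℕ} (hp : p ∈ t) (hq : q ∈ t) (hpq : p ≠ q) :
    ∃ t' ∈ K, t' ≠ t ∧ p ∈ t' ∧ q ∈ t' := by
  obtain ⟨t', ht', ht't⟩ :=
    exists_mem_ne (one_lt_two.trans_eq (hK.2 _ (pair_mem_edges ht hp hq hpq)).symm) t
  simp only [mem_filter, insert_subset_iff, singleton_subset_iff] at ht'
  exact ⟨t', ht'.1, ht't, ht'.2⟩

/-- The second triangle through the edge `vx` of `t` lies in the star of `v`, and it is not `t'`
because `x ∉ t'`. -/
lemma IsClosedSurface.mem_of_star_eq (hK : IsClosedSurface K) {v x : ℕ} {t t' u : Finset ℕ}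
    (hstar : K.filter (fun s => v ∈ s) = {t, t', u}) (ht : t ∈ K) (hvt : v ∈ t) (hxt : x ∈ t)
    (hxv : x ≠ v) (hxt' : x ∉ t') : x ∈ u := by
  obtain ⟨s, hs, hst, hvs, hxs⟩ := hK.exists_ne_of_mem ht hvt hxt hxv.symm
  have : s ∈ K.filter (fun s => v ∈ s) := mem_filter.2 ⟨hs, hvs⟩
  rw [hstar] at this
  simp only [mem_insert, mem_singleton] at this
  rcases this with rfl | rfl | rfl
  exacts [absurd rfl hst, absurd hxs hxt', hxs]

/-- A triangle of `K` sharing an edge `e` with a triangle of `S` lies in `S`, because the two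
triangles of `S` through `e` are already all the triangles of `K` through `e`; as `K` is
connected, `S` is all of `K`. -/
lemma IsClosedSurface.eq_of_subset_s8 (hK : IsClosedSurface K) {S : Complex} (hSK : S ⊆ K)
    (hS : S.Nonempty)
    (hedge : ∀ s ∈ S, ∀ e ⊆ s, e.card = 2 → 2 ≤ (S.filter (fun t => e ⊆ t)).card) : S = K := by
  have hclosed : ∀ a ∈ S, ∀ b, adj K a b → b ∈ S := by
    rintro a ha b ⟨-, hb, hab⟩
    have he : a ∩ b ∈ edges K :=
      mem_biUnion.2 ⟨a, hSK ha, mem_powersetCard.2 ⟨inter_subset_left, hab⟩⟩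
    have hfilter : S.filter (fun t => a ∩ b ⊆ t) = K.filter (fun t => a ∩ b ⊆ t) :=
      eq_of_subset_of_card_le (filter_subset_filter _ hSK)
        ((hK.2 _ he).trans_le (hedge a ha _ inter_subset_left hab))
    have : b ∈ S.filter (fun t => a ∩ b ⊆ t) := hfilter ▸ mem_filter.2 ⟨hb, inter_subset_right⟩
    exact (mem_filter.1 this).1
  obtain ⟨s, hs⟩ := hS
  refine hSK.antisymm fun c hc => ?_
  have hpath := hK.1.conn s (hSK hs) c hc
  clear hc
  induction hpath with
  | refl => exact hs
  | tail _ hbc ih => exact hclosed _ ih _ hbc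

lemma IsClosedSurface.image_erase_eq (hK : IsClosedSurface K) {Q : Finset ℕ} (hQ : Q.card = 4)
    (hQK : ∀ r ∈ Q, Q.erase r ∈ K) : Q.image Q.erase = K := by
  refine hK.eq_of_subset_s8 (image_subset_iff.2 hQK) ((card_pos.1 (by omega)).image _) ?_
  intro s hs e hes he
  obtain ⟨r₀, -, rfl⟩ := mem_image.1 hs
  have heQ : e ⊆ Q := hes.trans (erase_subset _ _)
  have hmem : ∀ r ∈ Q \ e, Q.erase r ∈ (Q.image Q.erase).filter (fun t => e ⊆ t) := fun r hr =>
    mem_filter.2 ⟨mem_image_of_mem _ (mem_sdiff.1 hr).1, subset_erase.2 ⟨heQ, (mem_sdiff.1 hr).2⟩⟩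
  obtain ⟨r₁, r₂, hr, hQe⟩ :=
    card_eq_two.1 (by rw [card_sdiff_of_subset heQ, hQ, he] : (Q \ e).card = 2)
  have hr₁ : r₁ ∈ Q \ e := by simp [hQe]
  have hr₂ : r₂ ∈ Q \ e := by simp [hQe]
  have hne : Q.erase r₁ ≠ Q.erase r₂ :=
    fun h => hr (erase_injOn Q (mem_sdiff.1 hr₁).1 (mem_sdiff.1 hr₂).1 h)
  calc 2 = ({Q.erase r₁, Q.erase r₂} : Complex).card := (card_pair hne).symm
    _ ≤ _ := card_le_card (insert_subset (hmem r₁ hr₁) (singleton_subset_iff.2 (hmem r₂ hr₂)))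

lemma IsClosedSurface.insert_mem_of_valence_eq_three_s8 (hK : IsClosedSurface K) {v w x y : ℕ}
    (hv : valence K v = 3) (hvwx : {v, w, x} ∈ K) (hvwy : {v, w, y} ∈ K)
    (hvx : v ≠ x) (hvy : v ≠ y) (hwx : w ≠ x) (hwy : w ≠ y) (hxy : x ≠ y) : {v, x, y} ∈ K := by
  have hne : ({v, w, x} : Finset ℕ) ≠ {v, w, y} := by
    intro h
    have : x ∈ ({v, w, y} : Finset ℕ) := h ▸ by simp
    simp [hvx.symm, hwx.symm, hxy] at this
  obtain ⟨u, -, -, hstar⟩ := exists_eq_triple_of_mem (a := {v, w, x}) (b := {v, w, y}) hv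
    (mem_filter.2 ⟨hvwx, by simp⟩) (mem_filter.2 ⟨hvwy, by simp⟩) hne
  have hu : u ∈ K.filter (fun s => v ∈ s) := hstar ▸ by simp
  obtain ⟨hu, hvu⟩ := mem_filter.1 hu
  have hxu : x ∈ u := hK.mem_of_star_eq hstar hvwx (by simp) (by simp) hvx.symm
    (by simp [hvx.symm, hwx.symm, hxy])
  have hyu : y ∈ u := hK.mem_of_star_eq (hstar.trans (insert_comm _ _ _)) hvwy (by simp)
    (by simp) hvy.symm (by simp [hvy.symm, hwy.symm, hxy.symm])
  rwa [← eq_triple_of_mem (hK.1.card3 u hu) hvu hxu hyu hvx hvy hxy]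

lemma IsClosedSurface.exists_erase_mem_of_valence_eq_three (hK : IsClosedSurface K) {v w : ℕ}
    (hvw : v ≠ w) (hv : valence K v = 3) (hw : valence K w = 3) {t : Finset ℕ} (ht : t ∈ K)
    (hvt : v ∈ t) (hwt : w ∈ t) : ∃ Q : Finset ℕ, Q.card = 4 ∧ ∀ r ∈ Q, Q.erase r ∈ K := by
  obtain ⟨x, hxv, hxw, rfl⟩ := exists_eq_triple_of_mem (hK.1.card3 _ ht) hvt hwt hvw
  obtain ⟨t', ht', ht't, hvt', hwt'⟩ := hK.exists_ne_of_mem ht hvt hwt hvw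
  obtain ⟨y, hyv, hyw, rfl⟩ := exists_eq_triple_of_mem (hK.1.card3 _ ht') hvt' hwt' hvw
  have hxy : x ≠ y := by rintro rfl; exact ht't rfl
  have hvxy := hK.insert_mem_of_valence_eq_three_s8 hv ht ht' hxv.symm hyv.symm hxw.symm
    hyw.symm hxy
  have hwxy := hK.insert_mem_of_valence_eq_three_s8 hw (by rwa [insert_comm]) (by rwa [insert_comm])
    hxw.symm hyw.symm hxv.symm hyv.symm hxy
  refine ⟨{v, w, x, y}, card_eq_four.2 ⟨v, w, x, y, hvw, hxv.symm, hyv.symm, hxw.symm, hyw.symm,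
    hxy, rfl⟩, ?_⟩
  simp only [mem_insert, mem_singleton]
  rintro r (rfl | rfl | rfl | rfl)
  all_goals simp [erase_insert_of_ne, hvw, hxy, hxw.symm, hyw.symm, hxv.symm, hyv.symm, ht, ht',
    hvxy, hwxy]

end

lemma iso_tetra_of_card_eq_four {Q : Finset ℕ} (hQ : Q.card = 4) : Iso (Q.image Q.erase) tetra := by
  have hvert : vertices (Q.image Q.erase) ⊆ Q := by
    simp only [vertices, biUnion_subset, mem_image, id]
    rintro _ ⟨r, -, rfl⟩
    exact erase_subset r Q
  obtain ⟨a, b, c, d, hab, hac, had, hbc, hbd, hcd, rfl⟩ := card_eq_four.1 hQ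
  refine ⟨fun n => if n = a then 1 else if n = b then 2 else if n = c then 3 else 4,
    Set.InjOn.mono (coe_subset.2 hvert) ?_, ?_⟩
  · intro m hm n hn hmn
    simp only [coe_insert, coe_singleton, Set.mem_insert_iff, Set.mem_singleton_iff] at hm hn
    rcases hm with hm | hm | hm | hm <;> rcases hn with hn | hn | hn | hn <;>
      simp_all [hab.symm, hac.symm, had.symm, hbc.symm, hbd.symm, hcd.symm]
  · simp [erase_insert_of_ne, hab, hac, had, hbc, hbd, hcd, hab.symm, hac.symm, had.symm, hbc.symm,
      hbd.symm, hcd.symm]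
    decide

/-- in a non-tetrahedral closed triangulated surface, distinct
3-valent vertices are non-adjacent and their open stars are disjoint. -/
theorem three_valent_nonadjacent (K : Complex) (h : IsClosedSurface K)
    (hK : ¬ Iso K tetra) (v w : ℕ) (hvw : v ≠ w)
    (hv : valence K v = 3) (hw : valence K w = 3) :
    ({v, w} : Finset ℕ) ∉ edges K ∧ ∀ t ∈ K, ¬ (v ∈ t ∧ w ∈ t) := by
  have hstars : ∀ t ∈ K, ¬ (v ∈ t ∧ w ∈ t) := by
    rintro t ht ⟨hvt, hwt⟩
    obtain ⟨Q, hQ, hQK⟩ := h.exists_erase_mem_of_valence_eq_three hvw hv hw ht hvt hwt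
    exact hK (h.image_erase_eq hQ hQK ▸ iso_tetra_of_card_eq_four hQ)
  refine ⟨fun hvwK => ?_, hstars⟩
  obtain ⟨t, ht, hvt, hwt⟩ := exists_mem_of_pair_mem_edges hvwK
  exact hstars t ht ⟨hvt, hwt⟩

end Tri
end
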